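/- arXiv:0804.0446 — 7 statements merged into one kernel-verified Lean document; each statement's English description precedes it below -/
import Mathlib

section
/- For every n ≥ 1, the generating function of the sum of record positions over S_n satisfies ∑_{σ ∈ S_n} q^{srec(σ)} = q(q^2+1)(q^3+2)⋯(q^n+n-1), where srec(σ) is the sum of the positions of the records of σ. -/
/-- Position `j` (0-indexed) is a record position of `σ`. -/
def IsRecordPos {n : ℕ} (σ : Equiv.Perm (Fin n)) (j : Fin n) : Prop :=
  ∀ i, i < j → σ i < σ j

instance {n : ℕ} (σ : Equiv.Perm (Fin n)) : DecidablePred (IsRecordPos σ) := by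
  unfold IsRecordPos; infer_instance

/-- The number of records of `σ`. -/
def recCount {n : ℕ} (σ : Equiv.Perm (Fin n)) : ℕ :=
  (Finset.univ.filter (fun j => IsRecordPos σ j)).card

/-- The sum of the (1-indexed) positions of the records of `σ`. -/
def srec {n : ℕ} (σ : Equiv.Perm (Fin n)) : ℕ :=
  ∑ j ∈ Finset.univ.filter (fun j => IsRecordPos σ j), (j.1 + 1)

open Finset Polynomial

namespace SrecAux

variable {n : ℕ}

def snocFun (τ : Equiv.Perm (Fin n)) (v : Fin (n + 1)) : Fin (n + 1) → Fin (n + 1) :=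
  Fin.snoc (fun k => v.succAbove (τ k)) v

lemma snocFun_castSucc (τ : Equiv.Perm (Fin n)) (v : Fin (n + 1)) (k : Fin n) :
    snocFun τ v k.castSucc = v.succAbove (τ k) := by
  simp [snocFun]

lemma snocFun_last (τ : Equiv.Perm (Fin n)) (v : Fin (n + 1)) :
    snocFun τ v (Fin.last n) = v := by
  simp [snocFun]

lemma snocFun_injective (τ : Equiv.Perm (Fin n)) (v : Fin (n + 1)) :
    Function.Injective (snocFun τ v) := by
  intro a b h
  induction a using Fin.lastCases with
  | last =>
      induction b using Fin.lastCases with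
      | last => rfl
      | cast k =>
          rw [snocFun_last, snocFun_castSucc] at h
          exact absurd h.symm (Fin.succAbove_ne v (τ k))
  | cast k =>
      induction b using Fin.lastCases with
      | last =>
          rw [snocFun_last, snocFun_castSucc] at h
          exact absurd h (Fin.succAbove_ne v (τ k))
      | cast m =>
          rw [snocFun_castSucc, snocFun_castSucc] at h
          have := τ.injective (Fin.succAbove_right_injective h)
          exact congrArg Fin.castSucc this

noncomputable def snocPerm (τ : Equiv.Perm (Fin n)) (v : Fin (n + 1)) :
    Equiv.Perm (Fin (n + 1)) :=
  Equiv.ofBijective _ (Finite.injective_iff_bijective.mp (snocFun_injective τ v))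

lemma snocPerm_castSucc (τ : Equiv.Perm (Fin n)) (v : Fin (n + 1)) (k : Fin n) :
    snocPerm τ v k.castSucc = v.succAbove (τ k) := snocFun_castSucc τ v k

lemma snocPerm_last (τ : Equiv.Perm (Fin n)) (v : Fin (n + 1)) :
    snocPerm τ v (Fin.last n) = v := snocFun_last τ v

lemma snocPerm_bijective :
    Function.Bijective (fun p : Equiv.Perm (Fin n) × Fin (n + 1) => snocPerm p.1 p.2) := by
  rw [Fintype.bijective_iff_injective_and_card]
  constructor
  · rintro ⟨τ, v⟩ ⟨τ', v'⟩ h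
    simp only [Prod.mk.injEq]
    have hv : v = v' := by
      have := congrArg (fun σ : Equiv.Perm (Fin (n+1)) => σ (Fin.last n)) h
      simpa [snocPerm_last] using this
    refine ⟨?_, hv⟩
    ext k
    have := congrArg (fun σ : Equiv.Perm (Fin (n+1)) => σ k.castSucc) h
    simp only [snocPerm_castSucc, hv] at this
    exact congrArg Fin.val (Fin.succAbove_right_injective this)
  · simp [Fintype.card_perm, Nat.factorial_succ, mul_comm]

lemma isRecordPos_castSucc (τ : Equiv.Perm (Fin n)) (v : Fin (n + 1)) (k : Fin n) :
    IsRecordPos (snocPerm τ v) k.castSucc ↔ IsRecordPos τ k := by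
  constructor
  · intro h m hm
    have := h m.castSucc (by simpa using hm)
    rw [snocPerm_castSucc, snocPerm_castSucc] at this
    exact Fin.succAbove_lt_succAbove_iff.mp this
  · intro h i hi
    induction i using Fin.lastCases with
    | last => exact absurd hi (not_lt.mpr (Fin.castSucc_lt_last k).le)
    | cast m =>
        rw [snocPerm_castSucc, snocPerm_castSucc]
        exact Fin.succAbove_lt_succAbove_iff.mpr (h m (by simpa using hi))

lemma isRecordPos_last (τ : Equiv.Perm (Fin n)) (v : Fin (n + 1)) :
    IsRecordPos (snocPerm τ v) (Fin.last n) ↔ v = Fin.last n := by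
  constructor
  · intro h
    by_contra hv
    obtain ⟨j, hj⟩ := Fin.exists_succAbove_eq (Ne.symm hv : Fin.last n ≠ v)
    have := h (τ.symm j).castSucc (Fin.castSucc_lt_last _)
    rw [snocPerm_castSucc, snocPerm_last, Equiv.apply_symm_apply, hj] at this
    exact absurd this (not_lt.mpr (Fin.le_last v))
  · intro hv i hi
    induction i using Fin.lastCases with
    | last => exact absurd hi (lt_irrefl _)
    | cast m =>
        subst hv
        rw [snocPerm_castSucc, snocPerm_last]
        exact lt_of_le_of_ne (Fin.le_last _) (Fin.succAbove_ne _ (τ m))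

lemma srec_snocPerm (τ : Equiv.Perm (Fin n)) (v : Fin (n + 1)) :
    srec (snocPerm τ v) = srec τ + (if v = Fin.last n then n + 1 else 0) := by
  unfold srec
  rw [Finset.sum_filter, Finset.sum_filter, Fin.sum_univ_castSucc]
  congr 1
  · apply Finset.sum_congr rfl
    intro k _
    simp [isRecordPos_castSucc]
  · simp [isRecordPos_last, Fin.val_last]

lemma key (n : ℕ) :
    ∑ σ : Equiv.Perm (Fin n), (Polynomial.X : Polynomial ℚ) ^ srec σ =
      ∏ i ∈ Finset.range n, (Polynomial.X ^ (i + 1) + Polynomial.C (i : ℚ)) := by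
  induction n with
  | zero => simp [srec]
  | succ n ih =>
      rw [Finset.prod_range_succ, ← ih]
      rw [← Fintype.sum_bijective _ snocPerm_bijective
        (fun p : Equiv.Perm (Fin n) × Fin (n + 1) =>
          (Polynomial.X : Polynomial ℚ) ^ srec (snocPerm p.1 p.2))
        _ (fun p => rfl)]
      rw [Fintype.sum_prod_type]
      rw [Finset.sum_mul]
      apply Finset.sum_congr rfl
      intro τ _
      have h1 : ∀ k : Fin n, (k.castSucc = Fin.last n) = False := by
        intro k
        simp [Fin.ext_iff, Fin.val_last, (k.2).ne]
      calc ∑ v : Fin (n + 1), (Polynomial.X : Polynomial ℚ) ^ srec (snocPerm τ v)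
          = ∑ v : Fin (n + 1), Polynomial.X ^ srec τ *
              (if v = Fin.last n then (Polynomial.X : Polynomial ℚ) ^ (n + 1) else 1) := by
            apply Finset.sum_congr rfl
            intro v _
            rw [srec_snocPerm, pow_add]
            split <;> simp
        _ = Polynomial.X ^ srec τ * ∑ v : Fin (n + 1),
              (if v = Fin.last n then (Polynomial.X : Polynomial ℚ) ^ (n + 1) else 1) := by
            rw [Finset.mul_sum]
        _ = Polynomial.X ^ srec τ * (Polynomial.X ^ (n + 1) + Polynomial.C (n : ℚ)) := by
            congr 1
            rw [Fin.sum_univ_castSucc]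
            simp [h1, Polynomial.C_eq_natCast, add_comm]

end SrecAux

/-- The generating function of the sum of record positions over `S_n` is
`q(q^2+1)(q^3+2)⋯(q^n+n-1)`. -/
theorem srec_generating_function (n : ℕ) (hn : 1 ≤ n) :
    ∑ σ : Equiv.Perm (Fin n), (Polynomial.X : Polynomial ℚ) ^ srec σ =
      ∏ i ∈ Finset.range n, (Polynomial.X ^ (i + 1) + Polynomial.C (i : ℚ)) := by
  exact SrecAux.key n
end

section
/- For every n ≥ 1 and every x ∈ [1/n, 1], setting k = ⌊nx⌋, the probability that a uniformly random permutation of S_n has exactly k records satisfies (n-k)!/(n · n!) ≤ P(rec = k) ≤ 2^n / k!. -/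
namespace RecAux

open Finset

variable {n : ℕ}

def recSet (σ : Equiv.Perm (Fin n)) : Finset (Fin n) :=
  Finset.univ.filter (fun j => IsRecordPos σ j)

lemma mem_recSet {σ : Equiv.Perm (Fin n)} {j : Fin n} :
    j ∈ recSet σ ↔ IsRecordPos σ j := by
  simp [recSet]

lemma step (σ τ : Equiv.Perm (Fin n)) (hset : recSet σ = recSet τ)
    (hval : ∀ j, j ∉ recSet σ → σ j = τ j) (i : Fin n)
    (IH : ∀ j, j < i → σ j = τ j) : ¬ σ i < τ i := by
  intro hlt
  by_cases hrec : i ∈ recSet σ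
  · set m := τ.symm (σ i) with hm
    have hτm : τ m = σ i := τ.apply_symm_apply _
    have hirec : i ∈ recSet τ := hset ▸ hrec
    have hmrec : m ∈ recSet τ := by
      by_contra hmr
      have h1 : σ m = τ m := hval m (by rw [hset]; exact hmr)
      have : σ m = σ i := by rw [h1, hτm]
      have : m = i := σ.injective this
      exact hmr (this ▸ hirec)
    rcases lt_trichotomy m i with h | h | h
    · have h1 : σ m = σ i := by rw [IH m h, hτm]
      exact absurd (σ.injective h1) h.ne
    · rw [h] at hτm; exact absurd (hτm ▸ hlt) (lt_irrefl _)
    · have := (mem_recSet.1 hmrec) i h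
      rw [hτm] at this
      exact absurd (hlt.trans this) (lt_irrefl _)
  · exact absurd (hval i hrec ▸ hlt) (lt_irrefl _)

lemma recon (σ τ : Equiv.Perm (Fin n)) (hset : recSet σ = recSet τ)
    (hval : ∀ j, j ∉ recSet σ → σ j = τ j) : σ = τ := by
  have key : ∀ m : ℕ, ∀ i : Fin n, i.val = m → σ i = τ i := by
    intro m
    induction m using Nat.strong_induction_on with
    | _ m IH =>
      intro i him
      have IH' : ∀ j, j < i → σ j = τ j := fun j hj =>
        IH j.val (him ▸ hj) j rfl
      have h1 : ¬ σ i < τ i := step σ τ hset hval i IH'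
      have h2 : ¬ τ i < σ i :=
        step τ σ hset.symm (fun j hj => (hval j (hset ▸ hj)).symm) i
          (fun j hj => (IH' j hj).symm)
      exact le_antisymm (not_lt.1 h2) (not_lt.1 h1)
  exact Equiv.ext fun i => key i.val i rfl

lemma emb_congr {m : ℕ} (s t : Finset (Fin n)) (hst : s = t) (hs : s.card = m)
    (ht : t.card = m) (b : Fin m) : s.orderEmbOfFin hs b = t.orderEmbOfFin ht b := by
  subst hst; rfl

lemma count_upper (k : ℕ) (hk : k ≤ n) :
    (Finset.univ.filter (fun σ : Equiv.Perm (Fin n) => recCount σ = k)).card ≤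
      2 ^ n * Nat.descFactorial n (n - k) := by
  classical
  set f : Equiv.Perm (Fin n) → Finset (Fin n) × (Fin (n - k) ↪ Fin n) := fun σ =>
    (recSet σ, if h : ((recSet σ)ᶜ).card = n - k then
        (((recSet σ)ᶜ).orderEmbOfFin h).toEmbedding.trans σ.toEmbedding
      else (Fin.castLEEmb (Nat.sub_le n k))) with hf
  have hcard : (Finset.univ.filter (fun σ : Equiv.Perm (Fin n) => recCount σ = k)).card ≤
      (Finset.univ : Finset (Finset (Fin n) × (Fin (n - k) ↪ Fin n))).card := by
    apply Finset.card_le_card_of_injOn f (fun _ _ => Finset.mem_univ _)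
    intro σ hσ τ hτ heq
    simp only [coe_filter, Set.mem_setOf_eq, Finset.mem_univ, true_and] at hσ hτ
    have hcσ : ((recSet σ)ᶜ).card = n - k := by
      rw [Finset.card_compl, Fintype.card_fin]
      have : (recSet σ).card = k := hσ
      omega
    have hcτ : ((recSet τ)ᶜ).card = n - k := by
      rw [Finset.card_compl, Fintype.card_fin]
      have : (recSet τ).card = k := hτ
      omega
    have hset : recSet σ = recSet τ := congrArg Prod.fst heq
    have h2 := congrArg Prod.snd heq
    simp only [hf, dif_pos hcσ, dif_pos hcτ] at h2
    have h3 : ∀ b : Fin (n - k), σ (((recSet σ)ᶜ).orderEmbOfFin hcσ b)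
        = τ (((recSet τ)ᶜ).orderEmbOfFin hcτ b) := by
      intro b
      exact congrFun (congrArg (fun (e : Fin (n - k) ↪ Fin n) => (e : Fin (n - k) → Fin n)) h2) b
    apply recon σ τ hset
    intro j hj
    have hj' : j ∈ (recSet σ)ᶜ := Finset.mem_compl.2 hj
    have : (j : Fin n) ∈ Set.range (((recSet σ)ᶜ).orderEmbOfFin hcσ) := by
      rw [Finset.range_orderEmbOfFin]; exact_mod_cast hj'
    obtain ⟨b, hb⟩ := this
    have he : ((recSet τ)ᶜ).orderEmbOfFin hcτ b = ((recSet σ)ᶜ).orderEmbOfFin hcσ b :=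
      emb_congr _ _ (by rw [hset]) _ _ _
    rw [← hb]
    rw [h3 b, he]
  calc (Finset.univ.filter (fun σ : Equiv.Perm (Fin n) => recCount σ = k)).card
      ≤ _ := hcard
    _ = 2 ^ n * Nat.descFactorial n (n - k) := by
        rw [Finset.card_univ, Fintype.card_prod, Fintype.card_finset, Fintype.card_fin,
          Fintype.card_embedding_eq, Fintype.card_fin, Fintype.card_fin]

variable (k : ℕ)

def epos (hk : k ≤ n) : Fin k ⊕ Fin (n - k) ≃ Fin n :=
  finSumFinEquiv.trans (finCongr (by omega))

def eval' (hk : k ≤ n) : Fin (n - k) ⊕ Fin k ≃ Fin n :=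
  finSumFinEquiv.trans (finCongr (by omega))

def ψ (hk : k ≤ n) (π : Equiv.Perm (Fin (n - k))) : Equiv.Perm (Fin n) :=
  (epos k hk).symm.trans ((Equiv.sumComm (Fin k) (Fin (n - k))).trans
    ((Equiv.sumCongr π (Equiv.refl (Fin k))).trans (eval' k hk)))

variable (hk : k ≤ n)

lemma ψ_apply_lt (π : Equiv.Perm (Fin (n - k))) (x : Fin n) (hx : x.val < k) :
    (ψ k hk π x).val = (n - k) + x.val := by
  have hx' : epos k hk (Sum.inl ⟨x.val, hx⟩) = x := by
    simp [epos, finCongr, Fin.ext_iff]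
  rw [← hx']
  have key : ψ k hk π (epos k hk (Sum.inl ⟨x.val, hx⟩)) = eval' k hk (Sum.inr ⟨x.val, hx⟩) := by
    simp [ψ]
  rw [key]
  simp [eval', epos, finCongr, Fin.ext_iff]

lemma ψ_apply_ge (π : Equiv.Perm (Fin (n - k))) (x : Fin n) (hx : k ≤ x.val)
    (b : Fin (n - k)) (hb : b.val = x.val - k) :
    (ψ k hk π x).val = (π b).val := by
  have hx' : epos k hk (Sum.inr b) = x := by
    have := x.isLt
    simp [epos, finCongr, Fin.ext_iff]; omega
  rw [← hx']
  have key : ψ k hk π (epos k hk (Sum.inr b)) = eval' k hk (Sum.inl (π b)) := by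
    simp [ψ]
  rw [key]
  simp [eval', finCongr, Fin.ext_iff]

lemma ψ_record (h1 : 1 ≤ k) (π : Equiv.Perm (Fin (n - k))) (x : Fin n) :
    IsRecordPos (ψ k hk π) x ↔ x.val < k := by
  constructor
  · intro hr
    by_contra hxk
    push_neg at hxk
    have h0 : (0 : ℕ) < n := by omega
    have hlt : (⟨0, h0⟩ : Fin n) < x := by
      rw [Fin.lt_def]; show (0:ℕ) < x.val; omega
    have hthis := hr ⟨0, h0⟩ hlt
    rw [Fin.lt_def, show ((⟨0, h0⟩ : Fin n)) = ⟨0,h0⟩ from rfl, ψ_apply_lt k hk π ⟨0, h0⟩ h1,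
      ψ_apply_ge k hk π x hxk ⟨x.val - k, by omega⟩ rfl] at hthis
    have := (π ⟨x.val - k, by omega⟩).isLt
    omega
  · intro hx i hix
    have hik : i.val < k := lt_trans (Fin.lt_def.1 hix) hx
    rw [Fin.lt_def, ψ_apply_lt k hk π i hik, ψ_apply_lt k hk π x hx]
    omega

lemma count_lower (hk : k ≤ n) (h1 : 1 ≤ k) :
    Nat.factorial (n - k) ≤
      (Finset.univ.filter (fun σ : Equiv.Perm (Fin n) => recCount σ = k)).card := by
  classical
  have hrec : ∀ π : Equiv.Perm (Fin (n - k)), recCount (ψ k hk π) = k := by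
    intro π
    have e1 : Finset.univ.filter (fun j => IsRecordPos (ψ k hk π) j)
        = Finset.univ.filter (fun j : Fin n => j.val < k) := by
      apply Finset.filter_congr
      intro j _
      simp [ψ_record k hk h1 π j]
    rw [recCount, e1]
    have e2 : Finset.univ.filter (fun j : Fin n => j.val < k)
        = Finset.univ.map (Fin.castLEEmb hk) := by
      ext j
      simp only [Finset.mem_filter, Finset.mem_univ, true_and, Finset.mem_map]
      constructor
      · intro hj; exact ⟨⟨j.val, hj⟩, by simp [Fin.castLEEmb, Fin.ext_iff]⟩
      · rintro ⟨a, rfl⟩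
        simpa [Fin.castLEEmb] using a.isLt
    rw [e2, Finset.card_map, Finset.card_univ, Fintype.card_fin]
  have hinj : Function.Injective (ψ k hk) := by
    intro π ρ h
    ext b
    have hb : k + b.val < n := by omega
    have e1 := ψ_apply_ge k hk π ⟨k + b.val, hb⟩ (by simp) b (by simp)
    have e2 := ψ_apply_ge k hk ρ ⟨k + b.val, hb⟩ (by simp) b (by simp)
    rw [h] at e1
    rw [e1] at e2
    exact e2
  calc Nat.factorial (n - k) = Fintype.card (Equiv.Perm (Fin (n - k))) := by
        rw [Fintype.card_perm, Fintype.card_fin]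
    _ = (Finset.univ : Finset (Equiv.Perm (Fin (n - k)))).card := Finset.card_univ.symm
    _ ≤ _ := Finset.card_le_card_of_injOn (ψ k hk)
        (fun π _ => Finset.mem_filter.2 ⟨Finset.mem_univ _, hrec π⟩)
        hinj.injOn

end RecAux

/-- For `x ∈ [1/n, 1]` and `k = ⌊nx⌋`, the probability of exactly `k` records
satisfies `(n-k)!/(n·n!) ≤ P(rec = k) ≤ 2^n / k!`. -/
theorem prob_rec_floor_bounds (n : ℕ) (hn : 1 ≤ n) (x : ℝ)
    (hx1 : 1 / (n : ℝ) ≤ x) (hx2 : x ≤ 1) :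
    (Nat.factorial (n - ⌊(n : ℝ) * x⌋₊) : ℝ) / ((n : ℝ) * Nat.factorial n) ≤
      ((Finset.univ.filter (fun σ : Equiv.Perm (Fin n) =>
          recCount σ = ⌊(n : ℝ) * x⌋₊)).card : ℝ) / (Nat.factorial n) ∧
    ((Finset.univ.filter (fun σ : Equiv.Perm (Fin n) =>
        recCount σ = ⌊(n : ℝ) * x⌋₊)).card : ℝ) / (Nat.factorial n) ≤
      (2 : ℝ) ^ n / Nat.factorial ⌊(n : ℝ) * x⌋₊ := by
  have hn0 : (0 : ℝ) < n := by exact_mod_cast hn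
  set k := ⌊(n : ℝ) * x⌋₊ with hkdef
  have hk1 : 1 ≤ k := by
    apply Nat.le_floor
    rw [div_le_iff₀ hn0] at hx1
    push_cast
    nlinarith
  have hkn : k ≤ n := by
    have h1 : (n : ℝ) * x ≤ (n : ℝ) := by nlinarith
    calc k ≤ ⌊(n : ℝ)⌋₊ := Nat.floor_le_floor h1
      _ = n := Nat.floor_natCast n
  set cnt := (Finset.univ.filter (fun σ : Equiv.Perm (Fin n) =>
      recCount σ = k)).card with hcnt
  have lower := RecAux.count_lower k hkn hk1
  have upper := RecAux.count_upper k hkn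
  have hfac : (0 : ℝ) < (Nat.factorial n : ℝ) := by
    exact_mod_cast Nat.factorial_pos n
  have hkfac : (0 : ℝ) < (Nat.factorial k : ℝ) := by
    exact_mod_cast Nat.factorial_pos k
  constructor
  · rw [div_le_div_iff₀ (by positivity) hfac]
    have h1 : ((Nat.factorial (n - k)) : ℝ) ≤ (cnt : ℝ) := by exact_mod_cast lower
    have hc0 : (0 : ℝ) ≤ (cnt : ℝ) := by positivity
    have hn1 : (1 : ℝ) ≤ (n : ℝ) := by exact_mod_cast hn
    calc ((Nat.factorial (n - k)) : ℝ) * (Nat.factorial n : ℝ)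
        ≤ (cnt : ℝ) * (Nat.factorial n : ℝ) := by
          exact mul_le_mul_of_nonneg_right h1 hfac.le
      _ ≤ (cnt : ℝ) * ((n : ℝ) * (Nat.factorial n : ℝ)) := by
          apply mul_le_mul_of_nonneg_left _ hc0
          nlinarith
  · rw [div_le_div_iff₀ hfac hkfac]
    have hnat : cnt * Nat.factorial k ≤ 2 ^ n * Nat.factorial n := by
      have hd : Nat.factorial k * Nat.descFactorial n (n - k) = Nat.factorial n := by
        have := Nat.factorial_mul_descFactorial (Nat.sub_le n k)
        rwa [show n - (n - k) = k by omega] at this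
      calc cnt * Nat.factorial k
          ≤ (2 ^ n * Nat.descFactorial n (n - k)) * Nat.factorial k :=
            Nat.mul_le_mul_right _ upper
        _ = 2 ^ n * (Nat.factorial k * Nat.descFactorial n (n - k)) := by ring
        _ = 2 ^ n * Nat.factorial n := by rw [hd]
    exact_mod_cast hnat
end

section
/- For a uniformly random permutation of S_n, the probability that the sum of its record positions equals k is the sum, over all r ≤ n and all r-tuples 1 = v_1 < v_2 < ⋯ < v_r ≤ n with v_1 + v_2 + ⋯ + v_r = k, of (1/(v_1 ⋯ v_r)) · ∏_{w} (1 − 1/w), where w ranges over the elements of {1,...,n} not among v_1,...,v_r. -/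
namespace SrecAux

open Finset Equiv

/-- The set of record positions. -/
def recSet {n : ℕ} (σ : Equiv.Perm (Fin n)) : Finset (Fin n) :=
  Finset.univ.filter (fun j => IsRecordPos σ j)

/-- Append value `p` at the last position: positions `castSucc i` get value
`p.succAbove (σ i)` and position `last n` gets value `p`. -/
def F {n : ℕ} (p : Fin (n + 1)) (σ : Equiv.Perm (Fin n)) : Equiv.Perm (Fin (n + 1)) :=
  finSuccEquivLast.trans ((Equiv.optionCongr σ).trans (finSuccEquiv' p).symm)

lemma F_castSucc {n : ℕ} (p : Fin (n + 1)) (σ : Equiv.Perm (Fin n)) (i : Fin n) :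
    F p σ (Fin.castSucc i) = p.succAbove (σ i) := by
  simp [F, finSuccEquiv'_symm_some]

lemma F_last {n : ℕ} (p : Fin (n + 1)) (σ : Equiv.Perm (Fin n)) :
    F p σ (Fin.last n) = p := by
  simp [F]

lemma F_bijective {n : ℕ} :
    Function.Bijective (fun pq : Fin (n + 1) × Equiv.Perm (Fin n) => F pq.1 pq.2) := by
  rw [Fintype.bijective_iff_injective_and_card]
  constructor
  · rintro ⟨p, σ⟩ ⟨q, τ⟩ h
    simp only at h
    have hp : p = q := by rw [← F_last p σ, ← F_last q τ, h]
    subst hp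
    have hσ : σ = τ := by
      ext i
      have := congrFun (congrArg (fun e => (e : Equiv.Perm (Fin (n+1))).toFun) h) (Fin.castSucc i)
      simp only [Equiv.toFun_as_coe, F_castSucc] at this
      exact congrArg Fin.val (Fin.succAbove_right_injective this)
    simp [hσ]
  · simp [Fintype.card_perm, Nat.factorial_succ, mul_comm]

lemma isRecordPos_F_last {n : ℕ} (p : Fin (n + 1)) (σ : Equiv.Perm (Fin n)) :
    IsRecordPos (F p σ) (Fin.last n) ↔ p = Fin.last n := by
  constructor
  · intro h
    by_contra hp
    obtain ⟨z, hz⟩ := Fin.exists_succAbove_eq (Ne.symm hp)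
    have h1 := h (Fin.castSucc (σ.symm z)) (Fin.castSucc_lt_last _)
    rw [F_castSucc, F_last, Equiv.apply_symm_apply, hz] at h1
    exact absurd h1 (not_lt.2 (Fin.le_last p))
  · rintro rfl
    intro i hi
    rcases Fin.exists_castSucc_eq.2 (Fin.ne_last_of_lt hi) with ⟨j, rfl⟩
    rw [F_castSucc, F_last]
    exact lt_of_le_of_ne (Fin.le_last _) (Fin.succAbove_ne _ _)

lemma isRecordPos_F_castSucc {n : ℕ} (p : Fin (n + 1)) (σ : Equiv.Perm (Fin n)) (j : Fin n) :
    IsRecordPos (F p σ) (Fin.castSucc j) ↔ IsRecordPos σ j := by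
  constructor
  · intro h i hi
    have := h (Fin.castSucc i) (by simpa using hi)
    rwa [F_castSucc, F_castSucc, Fin.succAbove_lt_succAbove_iff] at this
  · intro h i hi
    rcases Fin.exists_castSucc_eq.2 (Fin.ne_last_of_lt (lt_of_lt_of_le hi (Fin.le_last _))) with ⟨i', rfl⟩
    rw [F_castSucc, F_castSucc, Fin.succAbove_lt_succAbove_iff]
    exact h i' (by simpa using hi)

lemma recSet_F_eq {n : ℕ} (p : Fin (n + 1)) (σ : Equiv.Perm (Fin n)) (V : Finset (Fin (n + 1))) :
    recSet (F p σ) = V ↔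
      ((p = Fin.last n ↔ Fin.last n ∈ V) ∧
        recSet σ = Finset.univ.filter (fun j => Fin.castSucc j ∈ V)) := by
  constructor
  · rintro rfl
    refine ⟨?_, ?_⟩
    · rw [← isRecordPos_F_last p σ]
      simp [recSet]
    · ext j
      simp [recSet, isRecordPos_F_castSucc]
  · rintro ⟨h1, h2⟩
    have h3 : ∀ j, IsRecordPos σ j ↔ Fin.castSucc j ∈ V := by
      intro j
      have := congrArg (fun s => j ∈ s) h2
      simpa [recSet] using this
    ext i
    induction i using Fin.lastCases with
    | last => simp [recSet, isRecordPos_F_last, h1]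
    | cast j => simp [recSet, isRecordPos_F_castSucc, h3 j]

lemma countA : ∀ (n : ℕ) (V : Finset (Fin n)),
    ((Finset.univ.filter (fun σ : Equiv.Perm (Fin n) => recSet σ = V)).card) = ∏ j ∈ Vᶜ, j.1 := by
  intro n
  induction n with
  | zero =>
    intro V
    have hV : V = ∅ := Finset.eq_empty_of_isEmpty V
    subst hV
    simp [recSet, Finset.filter_eq_self]
  | succ n ih =>
    intro V
    set V' : Finset (Fin n) := Finset.univ.filter (fun j => Fin.castSucc j ∈ V) with hV'
    have hcard : (univ.filter (fun σ' : Equiv.Perm (Fin (n+1)) => recSet σ' = V)).card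
        = (univ.filter (fun pq : Fin (n+1) × Equiv.Perm (Fin n) => recSet (F pq.1 pq.2) = V)).card := by
      symm
      apply Finset.card_bij (fun pq _ => F pq.1 pq.2)
      · intro pq hpq
        simp only [Finset.mem_filter, Finset.mem_univ, true_and] at hpq ⊢
        exact hpq
      · intro pq _ pq' _ h
        exact F_bijective.injective h
      · intro σ' hσ'
        obtain ⟨pq, hpq⟩ := F_bijective.surjective σ'
        simp only at hpq
        refine ⟨pq, ?_, hpq⟩
        simp only [Finset.mem_filter, Finset.mem_univ, true_and] at hσ' ⊢
        rw [hpq]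
        exact hσ'
    have hsplit : (univ.filter (fun pq : Fin (n+1) × Equiv.Perm (Fin n) => recSet (F pq.1 pq.2) = V))
        = (univ.filter (fun p : Fin (n+1) => (p = Fin.last n ↔ Fin.last n ∈ V))) ×ˢ
          (univ.filter (fun σ : Equiv.Perm (Fin n) => recSet σ = V')) := by
      ext pq
      simp [recSet_F_eq, hV']
    have hp : (univ.filter (fun p : Fin (n+1) => (p = Fin.last n ↔ Fin.last n ∈ V))).card
        = if Fin.last n ∈ V then 1 else n := by
      by_cases hV : Fin.last n ∈ V
      · simp only [hV, iff_true, if_true]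
        rw [Finset.filter_eq']
        simp
      · simp only [hV, iff_false, if_false]
        rw [Finset.filter_ne']
        simp
    have hprod : (∏ j ∈ Vᶜ, (j.1 : ℕ)) = (if Fin.last n ∈ V then 1 else n) * ∏ j ∈ V'ᶜ, (j.1 : ℕ) := by
      have e1 : ∀ (m : ℕ) (W : Finset (Fin m)), (∏ j ∈ Wᶜ, (j.1 : ℕ)) = ∏ j : Fin m, if j ∈ W then 1 else j.1 := by
        intro m W
        have hc : Wᶜ = Finset.univ.filter (fun j => j ∉ W) := by ext j; simp
        rw [hc, Finset.prod_filter]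
        exact Finset.prod_congr rfl (fun j _ => by by_cases h : j ∈ W <;> simp [h])
      rw [e1, e1, Fin.prod_univ_castSucc]
      have hmem : ∀ j : Fin n, (j ∈ V') = (Fin.castSucc j ∈ V) := by
        intro j; simp [hV']
      simp only [hmem]
      by_cases hV : Fin.last n ∈ V <;> simp [hV, Fin.val_last, mul_comm]
    rw [hcard, hsplit, Finset.card_product, hp, ih V', hprod]

end SrecAux

/-- Probabilistic formula for the number of permutations whose record positions
sum to `k`: the probability equals the sum, over all sets of record positions `V`
containing position `1` with `∑_{v ∈ V} v = k`, of
`∏_{v ∈ V} 1/v · ∏_{v ∉ V} (1 - 1/v)`. -/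
theorem prob_srec_eq (n k : ℕ) (hn : 1 ≤ n) :
    ((Finset.univ.filter (fun σ : Equiv.Perm (Fin n) => srec σ = k)).card : ℚ)
        / (Nat.factorial n) =
      ∑ V ∈ Finset.univ.filter
          (fun V : Finset (Fin n) =>
            (⟨0, hn⟩ : Fin n) ∈ V ∧ ∑ v ∈ V, (v.1 + 1) = k),
        (∏ v ∈ V, (1 : ℚ) / (v.1 + 1)) * ∏ v ∈ Vᶜ, (1 - (1 : ℚ) / (v.1 + 1)) := by
  classical
  have hfactN : (∏ j : Fin n, (j.1 + 1)) = Nat.factorial n := by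
    exact (Fin.prod_univ_eq_prod_range (fun i => i + 1) n).trans
      (Finset.prod_range_add_one_eq_factorial n)
  have hfactQ : (∏ v : Fin n, ((v.1 : ℚ) + 1)) = (Nat.factorial n : ℚ) := by
    rw [← hfactN]
    push_cast
    rfl
  have hne : (Nat.factorial n : ℚ) ≠ 0 := Nat.cast_ne_zero.2 n.factorial_ne_zero
  have termEq : ∀ V : Finset (Fin n),
      ((∏ j ∈ Vᶜ, (j.1 : ℕ) : ℕ) : ℚ) / Nat.factorial n
        = (∏ v ∈ V, (1 : ℚ) / (v.1 + 1)) * ∏ v ∈ Vᶜ, (1 - (1 : ℚ) / (v.1 + 1)) := by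
    intro V
    rw [div_eq_iff hne]
    have h1 : ∀ v : Fin n, (1 - (1 : ℚ) / (v.1 + 1)) = v.1 * (1 / (v.1 + 1)) := by
      intro v
      have hv : ((v.1 : ℚ) + 1) ≠ 0 := by positivity
      field_simp
      ring
    rw [Finset.prod_congr rfl (fun v _ => h1 v), Finset.prod_mul_distrib, ← hfactQ]
    push_cast
    symm
    calc (∏ v ∈ V, (1 : ℚ) / (v.1 + 1)) *
          ((∏ v ∈ Vᶜ, (v.1 : ℚ)) * ∏ v ∈ Vᶜ, (1 : ℚ) / (v.1 + 1)) *
          ∏ v : Fin n, ((v.1 : ℚ) + 1)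
        = (∏ v ∈ Vᶜ, (v.1 : ℚ)) *
          (((∏ v ∈ V, (1 : ℚ) / (v.1 + 1)) * ∏ v ∈ Vᶜ, (1 : ℚ) / (v.1 + 1)) *
            ∏ v : Fin n, ((v.1 : ℚ) + 1)) := by ring
      _ = (∏ v ∈ Vᶜ, (v.1 : ℚ)) *
          ((∏ v : Fin n, (1 : ℚ) / (v.1 + 1)) * ∏ v : Fin n, ((v.1 : ℚ) + 1)) := by
            rw [Finset.prod_mul_prod_compl]
      _ = (∏ v ∈ Vᶜ, (v.1 : ℚ)) * ∏ v : Fin n, ((1 : ℚ) / (v.1 + 1) * ((v.1 : ℚ) + 1)) := by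
            rw [Finset.prod_mul_distrib]
      _ = ∏ v ∈ Vᶜ, (v.1 : ℚ) := by
            have h2 : (∏ v : Fin n, ((1 : ℚ) / (v.1 + 1) * ((v.1 : ℚ) + 1))) = 1 :=
              Finset.prod_eq_one (fun v _ =>
                one_div_mul_cancel (show ((v.1 : ℚ) + 1) ≠ 0 by positivity))
            rw [h2, mul_one]
  have key : ∀ V : Finset (Fin n),
      ((Finset.univ.filter (fun σ : Equiv.Perm (Fin n) => SrecAux.recSet σ = V)).card : ℚ)
          / Nat.factorial n
        = (∏ v ∈ V, (1 : ℚ) / (v.1 + 1)) * ∏ v ∈ Vᶜ, (1 - (1 : ℚ) / (v.1 + 1)) := by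
    intro V
    rw [SrecAux.countA n V, termEq V]
  have hA : ∀ σ ∈ Finset.univ.filter (fun σ : Equiv.Perm (Fin n) => srec σ = k),
      SrecAux.recSet σ ∈ Finset.univ.filter
        (fun V : Finset (Fin n) => ∑ v ∈ V, (v.1 + 1) = k) := by
    intro σ hσ
    simp only [Finset.mem_filter, Finset.mem_univ, true_and] at hσ ⊢
    exact hσ
  rw [Finset.card_eq_sum_card_fiberwise hA]
  have hfib : ∀ V ∈ Finset.univ.filter (fun V : Finset (Fin n) => ∑ v ∈ V, (v.1 + 1) = k),
      ((Finset.univ.filter (fun σ : Equiv.Perm (Fin n) => srec σ = k)).filter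
        (fun σ => SrecAux.recSet σ = V))
        = Finset.univ.filter (fun σ : Equiv.Perm (Fin n) => SrecAux.recSet σ = V) := by
    intro V hV
    simp only [Finset.mem_filter, Finset.mem_univ, true_and] at hV
    ext σ
    simp only [Finset.mem_filter, Finset.mem_univ, true_and]
    constructor
    · exact fun h => h.2
    · intro h
      refine ⟨?_, h⟩
      show (∑ j ∈ Finset.univ.filter (fun j => IsRecordPos σ j), (j.1 + 1)) = k
      rw [show Finset.univ.filter (fun j => IsRecordPos σ j) = V from h]
      exact hV
  push_cast
  rw [Finset.sum_div, Finset.sum_congr rfl (fun V hV => by rw [hfib V hV]),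
    Finset.sum_congr rfl (fun V _ => key V)]
  symm
  apply Finset.sum_subset
  · exact Finset.monotone_filter_right _ (fun V _ hV => hV.2)
  · intro V hV hVn
    simp only [Finset.mem_filter, Finset.mem_univ, true_and] at hV hVn
    have h0 : (⟨0, hn⟩ : Fin n) ∉ V := fun h => hVn ⟨h, hV⟩
    have : (∏ v ∈ Vᶜ, (1 - (1 : ℚ) / (v.1 + 1))) = 0 := by
      apply Finset.prod_eq_zero (Finset.mem_compl.2 h0)
      norm_num
    rw [this, mul_zero]
end

section
/- The number C(n,k) of permutations of S_n for which the sum of the record positions equals k satisfies: C(n,k) = 0 if and only if k = 2 or k = n(n+1)/2 − 1, for k in the range 1 ≤ k ≤ n(n+1)/2 (and n ≥ 3). -/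
/-- `srecCount n k`: the number of permutations of `S_n` whose record positions
sum to `k`. -/
def srecCount (n k : ℕ) : ℕ :=
  (Finset.univ.filter (fun σ : Equiv.Perm (Fin n) => srec σ = k)).card

/-- Position `0` is always a record position. -/
lemma zero_record {n : ℕ} (hn : 0 < n) (σ : Equiv.Perm (Fin n)) :
    IsRecordPos σ ⟨0, hn⟩ := by
  intro i hi
  have h := Fin.lt_def.mp hi
  simp only [] at h
  exact absurd h (by omega)

/-- Any set of positions containing `0` is the record set of some permutation. -/
lemma exists_perm_records {n : ℕ} (hn : 0 < n) (S : Finset (Fin n))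
    (h0 : (⟨0, hn⟩ : Fin n) ∈ S) :
    ∃ σ : Equiv.Perm (Fin n), ∀ j, IsRecordPos σ j ↔ j ∈ S := by
  classical
  have hmn : S.card ≤ n := by
    have := S.card_le_univ
    simpa using this
  set m := S.card with hm
  have hcm : Sᶜ.card = n - m := by simp [Finset.card_compl, hm]
  set eS := S.orderIsoOfFin hm.symm with heS
  set eC := Sᶜ.orderIsoOfFin hcm with heC
  have hb1 : ∀ (r : Fin m), n - m + r.1 < n := fun r => by have := r.isLt; omega
  have hb2 : ∀ (r : Fin (n - m)), r.1 < n := fun r => by have := r.isLt; omega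
  set f : Fin n → Fin n := fun j =>
    if h : j ∈ S then ⟨n - m + (eS.symm ⟨j, h⟩).1, hb1 _⟩
    else ⟨(eC.symm ⟨j, Finset.mem_compl.mpr h⟩).1, hb2 _⟩ with hf
  have hfS : ∀ j (h : j ∈ S), (f j).1 = n - m + (eS.symm ⟨j, h⟩).1 := by
    intro j h; simp [hf, dif_pos h]
  have hfC : ∀ j (h : j ∉ S), (f j).1 = (eC.symm ⟨j, Finset.mem_compl.mpr h⟩).1 := by
    intro j h; simp [hf, dif_neg h]
  have hgeS : ∀ j (h : j ∈ S), n - m ≤ (f j).1 := by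
    intro j h; rw [hfS j h]; omega
  have hltC : ∀ j (h : j ∉ S), (f j).1 < n - m := by
    intro j h; rw [hfC j h]; exact (eC.symm _).isLt
  have hinj : Function.Injective f := by
    intro a b hab
    have hab' := congrArg Fin.val hab
    by_cases ha : a ∈ S <;> by_cases hb : b ∈ S
    · rw [hfS a ha, hfS b hb] at hab'
      have h1 : eS.symm ⟨a, ha⟩ = eS.symm ⟨b, hb⟩ := Fin.ext (by omega)
      have h2 := eS.symm.injective h1
      exact Subtype.ext_iff.mp h2
    · have := hgeS a ha; have := hltC b hb; omega
    · have := hltC a ha; have := hgeS b hb; omega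
    · rw [hfC a ha, hfC b hb] at hab'
      have h1 : eC.symm ⟨a, Finset.mem_compl.mpr ha⟩ = eC.symm ⟨b, Finset.mem_compl.mpr hb⟩ :=
        Fin.ext hab'
      have h2 := eC.symm.injective h1
      exact Subtype.ext_iff.mp h2
  set σ : Equiv.Perm (Fin n) := Equiv.ofBijective f (Finite.injective_iff_bijective.mp hinj)
    with hσ
  have hσa : ∀ j, σ j = f j := fun j => rfl
  have hmono : ∀ i j (hi : i ∈ S) (hj : j ∈ S), i < j → (f i).1 < (f j).1 := by
    intro i j hi hj hij
    rw [hfS i hi, hfS j hj]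
    have : eS.symm ⟨i, hi⟩ < eS.symm ⟨j, hj⟩ := by
      apply eS.symm.strictMono
      exact Subtype.mk_lt_mk.mpr hij
    have := Fin.lt_def.mp this
    omega
  refine ⟨σ, fun j => ⟨?_, ?_⟩⟩
  · intro hrec
    by_contra hj
    have hjne : j.1 ≠ 0 := by
      intro hh
      exact hj (by rwa [show j = ⟨0, hn⟩ from Fin.ext hh])
    have h0j : (⟨0, hn⟩ : Fin n) < j := Fin.lt_def.mpr (by
      show 0 < j.1; omega)
    have := Fin.lt_def.mp (hrec ⟨0, hn⟩ h0j)
    rw [hσa, hσa] at this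
    have := hgeS _ h0
    have := hltC _ hj
    omega
  · intro hj i hij
    rw [Fin.lt_def, hσa, hσa]
    by_cases hi : i ∈ S
    · exact hmono i j hi hj hij
    · have := hltC i hi
      have := hgeS j hj
      omega

/-- Subset sums of `{2, …, n}`: everything in `[0, Σ]` except `1` and `Σ - 1`
is achievable. -/
lemma ssum : ∀ n, 3 ≤ n → ∀ t, t ≤ ∑ x ∈ Finset.Icc 2 n, x → t ≠ 1 →
    t ≠ (∑ x ∈ Finset.Icc 2 n, x) - 1 →
    ∃ B ⊆ Finset.Icc 2 n, ∑ x ∈ B, x = t := by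
  intro n hn
  induction n, hn using Nat.le_induction with
  | base =>
    intro t ht h1 hG
    have hIcc : (Finset.Icc 2 3) = {2, 3} := by decide
    rw [hIcc] at ht hG ⊢
    have h5 : (∑ x ∈ ({2,3} : Finset ℕ), x) = 5 := by decide
    rw [h5] at ht hG
    interval_cases t
    · exact ⟨∅, by simp, by simp⟩
    · omega
    · exact ⟨{2}, by decide, by decide⟩
    · exact ⟨{3}, by decide, by decide⟩
    · omega
    · exact ⟨{2, 3}, by decide, by decide⟩
  | succ n hn ih =>
    intro t ht h1 hG
    have hnotmem : (n + 1) ∉ Finset.Icc 2 n := by simp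
    have hins : Finset.Icc 2 (n+1) = insert (n+1) (Finset.Icc 2 n) := by
      exact (Finset.insert_Icc_right_eq_Icc_add_one (by omega)).symm
    have hsum' : (∑ x ∈ Finset.Icc 2 (n+1), x) = (n+1) + ∑ x ∈ Finset.Icc 2 n, x := by
      rw [hins, Finset.sum_insert hnotmem]
    set G := ∑ x ∈ Finset.Icc 2 n, x with hGdef
    have hGlb : n + 2 ≤ G := by
      have hsub : ({2, n} : Finset ℕ) ⊆ Finset.Icc 2 n := by
        intro x hx; simp at hx ⊢; omega
      have h2 : (∑ x ∈ ({2, n} : Finset ℕ), x) ≤ ∑ x ∈ Finset.Icc 2 n, x :=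
        Finset.sum_le_sum_of_subset hsub
      rw [Finset.sum_pair (show (2:ℕ) ≠ n by omega)] at h2
      omega
    rw [hsum'] at ht hG
    by_cases hle : t ≤ G
    · by_cases heq : t = G - 1
      · have hsub : ({2, n} : Finset ℕ) ⊆ Finset.Icc 2 (n+1) := by
          intro x hx; simp at hx ⊢; omega
        have hkey : (∑ x ∈ Finset.Icc 2 (n+1) \ {2, n}, x) + ∑ x ∈ ({2, n} : Finset ℕ), x
            = ∑ x ∈ Finset.Icc 2 (n+1), x := Finset.sum_sdiff hsub
        rw [Finset.sum_pair (show (2:ℕ) ≠ n by omega), hsum'] at hkey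
        exact ⟨Finset.Icc 2 (n+1) \ {2, n}, Finset.sdiff_subset, by omega⟩
      · obtain ⟨B, hB1, hB2⟩ := ih t hle h1 heq
        exact ⟨B, hB1.trans (by rw [hins]; exact Finset.subset_insert _ _), hB2⟩
    · obtain ⟨B, hB1, hB2⟩ := ih (t - (n+1)) (by omega) (by omega) (by omega)
      have hnB : (n+1) ∉ B := fun hh => hnotmem (hB1 hh)
      refine ⟨insert (n+1) B, ?_, ?_⟩
      · rw [hins]; exact Finset.insert_subset_insert _ hB1
      · rw [Finset.sum_insert hnB, hB2]; omega

lemma sum_attachFin' {n : ℕ} (s : Finset ℕ) (h : ∀ m ∈ s, m < n) (f : ℕ → ℕ) :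
    ∑ j ∈ s.attachFin h, f j.1 = ∑ x ∈ s, f x := by
  apply Finset.sum_bij (i := fun (a : Fin n) _ => a.1)
  · intro a ha; exact (Finset.mem_attachFin h).mp ha
  · intro a _ b _ hab; exact Fin.ext hab
  · intro x hx; exact ⟨⟨x, h x hx⟩, (Finset.mem_attachFin h).mpr hx, rfl⟩
  · intro a _; rfl

lemma srec_ne_two {n : ℕ} (hn : 0 < n) (σ : Equiv.Perm (Fin n)) : srec σ ≠ 2 := by
  intro h
  set R := Finset.univ.filter (fun j => IsRecordPos σ j) with hR
  have h0 : (⟨0, hn⟩ : Fin n) ∈ R :=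
    Finset.mem_filter.mpr ⟨Finset.mem_univ _, zero_record hn σ⟩
  rw [srec, ← hR, ← Finset.add_sum_erase _ _ h0] at h
  have hv : ((⟨0, hn⟩ : Fin n)).1 = 0 := rfl
  rcases (R.erase ⟨0, hn⟩).eq_empty_or_nonempty with he | ⟨j, hj⟩
  · rw [he, Finset.sum_empty] at h; omega
  · have hjne : j ≠ ⟨0, hn⟩ := (Finset.mem_erase.mp hj).1
    have hj1 : j.1 ≠ 0 := fun hh => hjne (Fin.ext hh)
    have hle : j.1 + 1 ≤ ∑ x ∈ R.erase ⟨0, hn⟩, (x.1 + 1) :=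
      Finset.single_le_sum (f := fun x : Fin n => x.1 + 1) (fun i _ => Nat.zero_le _) hj
    omega

lemma srec_ne_pred {n : ℕ} (hn : 0 < n) (σ : Equiv.Perm (Fin n)) :
    srec σ ≠ (∑ j : Fin n, (j.1 + 1)) - 1 := by
  intro h
  set R := Finset.univ.filter (fun j => IsRecordPos σ j) with hR
  have h0 : (⟨0, hn⟩ : Fin n) ∈ R :=
    Finset.mem_filter.mpr ⟨Finset.mem_univ _, zero_record hn σ⟩
  have hsplit : (∑ j ∈ R, (j.1 + 1)) + ∑ j ∈ Rᶜ, (j.1 + 1) = ∑ j : Fin n, (j.1 + 1) :=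
    Finset.sum_add_sum_compl R _
  have hsrec : srec σ = ∑ j ∈ R, (j.1 + 1) := rfl
  have htot1 : 1 ≤ ∑ j : Fin n, (j.1 + 1) := by
    have : ((⟨0, hn⟩ : Fin n)).1 + 1 ≤ ∑ j : Fin n, (j.1 + 1) :=
      Finset.single_le_sum (f := fun x : Fin n => x.1 + 1) (fun i _ => Nat.zero_le _)
        (Finset.mem_univ _)
    omega
  have hc : ∑ j ∈ Rᶜ, (j.1 + 1) = 1 := by omega
  rcases Rᶜ.eq_empty_or_nonempty with he | ⟨j, hj⟩
  · rw [he] at hc; simp at hc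
  · have hle : j.1 + 1 ≤ ∑ x ∈ Rᶜ, (x.1 + 1) :=
      Finset.single_le_sum (f := fun x : Fin n => x.1 + 1) (fun i _ => Nat.zero_le _) hj
    have hv : ((⟨0, hn⟩ : Fin n)).1 = 0 := rfl
    have hj0 : j = ⟨0, hn⟩ := Fin.ext (by omega)
    rw [hj0, Finset.mem_compl] at hj
    exact hj h0

/-- For `n ≥ 3` and `1 ≤ k ≤ n(n+1)/2`, `C(n,k) = 0` iff `k = 2` or
`k = n(n+1)/2 - 1`. -/
theorem srecCount_eq_zero_iff (n k : ℕ) (hn : 3 ≤ n) (hk1 : 1 ≤ k)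
    (hk2 : k ≤ n * (n + 1) / 2) :
    srecCount n k = 0 ↔ k = 2 ∨ k = n * (n + 1) / 2 - 1 := by
  have hn0 : 0 < n := by omega
  have hN2 : (n * (n + 1) / 2) * 2 = n * (n + 1) :=
    Nat.div_mul_cancel (Nat.even_mul_succ_self n).two_dvd
  have h12 : 12 ≤ n * (n + 1) := by
    calc (12:ℕ) = 3 * 4 := by norm_num
    _ ≤ n * (n + 1) := Nat.mul_le_mul hn (by omega)
  have hgauss := Finset.sum_range_id_mul_two (n + 1)
  have hmc : (n + 1) * (n + 1 - 1) = n * (n + 1) := by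
    simp [Nat.mul_comm]
  -- total sum of all positions
  have htot2 : (∑ j : Fin n, (j.1 + 1)) = ∑ i ∈ Finset.range (n + 1), i := by
    rw [Fin.sum_univ_eq_sum_range (fun i => i + 1) n]
    rw [Finset.sum_range_succ' (fun i => i) n]
    simp
  have htot : (∑ j : Fin n, (j.1 + 1)) = n * (n + 1) / 2 := by
    rw [htot2]; omega
  -- sum of Icc 2 n
  have hGsum : 1 + (∑ x ∈ Finset.Icc 2 n, x) = ∑ i ∈ Finset.range (n + 1), i := by
    rw [Finset.range_eq_Ico,
      ← Finset.sum_Ico_consecutive (fun i => i) (by omega : 0 ≤ 2) (by omega : 2 ≤ n + 1),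
      show (∑ i ∈ Finset.Ico 0 2, i) = 1 by decide, Finset.Ico_add_one_right_eq_Icc]
  have hG : (∑ x ∈ Finset.Icc 2 n, x) = n * (n + 1) / 2 - 1 := by omega
  constructor
  · intro hzero
    by_contra hne
    push_neg at hne
    obtain ⟨hne2, hneN⟩ := hne
    obtain ⟨B, hBsub, hBsum⟩ := ssum n hn (k - 1) (by omega) (by omega) (by omega)
    have hB'mem : ∀ x ∈ B.image (fun b => b - 1), 1 ≤ x ∧ x < n := by
      intro x hx
      simp only [Finset.mem_image] at hx
      obtain ⟨b, hb, rfl⟩ := hx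
      have := hBsub hb
      rw [Finset.mem_Icc] at this
      omega
    have hlt : ∀ x ∈ B.image (fun b => b - 1), x < n := fun x hx => (hB'mem x hx).2
    set A := (B.image (fun b => b - 1)).attachFin hlt with hA
    have h0nA : (⟨0, hn0⟩ : Fin n) ∉ A := by
      rw [hA, Finset.mem_attachFin]
      intro hx
      have := (hB'mem 0 hx).1
      omega
    set S := insert (⟨0, hn0⟩ : Fin n) A with hS
    obtain ⟨σ, hσ⟩ := exists_perm_records hn0 S (Finset.mem_insert_self _ _)
    have hfilter : Finset.univ.filter (fun j => IsRecordPos σ j) = S := by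
      ext j; simp [hσ j]
    have hsum1 : ∑ j ∈ A, (j.1 + 1) = ∑ x ∈ B.image (fun b => b - 1), (x + 1) :=
      sum_attachFin' _ hlt (fun x => x + 1)
    have hsum2 : ∑ x ∈ B.image (fun b => b - 1), (x + 1) = ∑ b ∈ B, b := by
      rw [Finset.sum_image (fun x hx y hy hxy => by
        have hx2 := hBsub hx
        have hy2 := hBsub hy
        rw [Finset.mem_Icc] at hx2 hy2
        omega)]
      apply Finset.sum_congr rfl
      intro b hb
      have := hBsub hb
      rw [Finset.mem_Icc] at this
      omega
    have hsrec : srec σ = k := by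
      rw [srec, hfilter, hS, Finset.sum_insert h0nA, hsum1, hsum2, hBsum]
      have hv : ((⟨0, hn0⟩ : Fin n)).1 = 0 := rfl
      omega
    exact absurd hzero (by
      rw [srecCount]
      exact Finset.card_ne_zero_of_mem
        (Finset.mem_filter.mpr ⟨Finset.mem_univ σ, hsrec⟩))
  · rintro (rfl | rfl)
    · rw [srecCount, Finset.card_eq_zero, Finset.filter_eq_empty_iff]
      intro σ _
      exact srec_ne_two hn0 σ
    · rw [srecCount, Finset.card_eq_zero, Finset.filter_eq_empty_iff]
      intro σ _
      rw [← htot]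
      exact srec_ne_pred hn0 σ
end

section
/- Let m(n,k) be the minimum of v_1 v_2 ⋯ v_r over all r ≤ n and all tuples 1 = v_1 < v_2 < ⋯ < v_r ≤ n with v_1 + ⋯ + v_r = k (assuming such a tuple exists, i.e., 1 ≤ k ≤ n(n+1)/2, k ≠ 2, k ≠ n(n+1)/2 − 1). Then the probability that a uniformly random permutation of S_n has record positions summing to k satisfies 1/(n·m(n,k)) ≤ P(srec = k) ≤ 2^n/m(n,k). -/
/-- `mProd n k`: the minimum of `v₁⋯v_r` over tuples `1 = v₁ < ⋯ < v_r ≤ n`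
with `v₁ + ⋯ + v_r = k` (a tuple is encoded as the finset `V` of 0-indexed
positions, so `v = i + 1` for `i ∈ V`). -/
noncomputable def mProd (n k : ℕ) : ℕ :=
  sInf {p : ℕ | ∃ V : Finset (Fin n), (∃ v ∈ V, v.1 = 0) ∧
    (∑ v ∈ V, (v.1 + 1) = k) ∧ p = ∏ v ∈ V, (v.1 + 1)}



open Finset

def recSet {n : ℕ} (σ : Equiv.Perm (Fin n)) : Finset (Fin n) :=
  Finset.univ.filter (fun j => IsRecordPos σ j)

lemma mem_recSet {n : ℕ} {σ : Equiv.Perm (Fin n)} {x : Fin n} :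
    x ∈ recSet σ ↔ IsRecordPos σ x := by simp [recSet]

def NV (n : ℕ) (V : Finset (Fin n)) : ℕ :=
  (Finset.univ.filter (fun σ : Equiv.Perm (Fin n) => recSet σ = V)).card

def gfun {n : ℕ} (p : Fin (n+1)) (σ : Equiv.Perm (Fin n)) : Fin (n+1) → Fin (n+1) :=
  Fin.lastCases p (fun j => p.succAbove (σ j))

@[simp] lemma gfun_last {n : ℕ} (p : Fin (n+1)) (σ : Equiv.Perm (Fin n)) :
    gfun p σ (Fin.last n) = p := Fin.lastCases_last

@[simp] lemma gfun_castSucc {n : ℕ} (p : Fin (n+1)) (σ : Equiv.Perm (Fin n)) (j : Fin n) :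
    gfun p σ j.castSucc = p.succAbove (σ j) := Fin.lastCases_castSucc j

lemma gfun_injective {n : ℕ} (p : Fin (n+1)) (σ : Equiv.Perm (Fin n)) :
    Function.Injective (gfun p σ) := by
  intro x y h
  induction x using Fin.lastCases with
  | last =>
    induction y using Fin.lastCases with
    | last => rfl
    | cast y => simp at h
  | cast x =>
    induction y using Fin.lastCases with
    | last => simp at h
    | cast y =>
      simp at h
      exact congrArg Fin.castSucc h

noncomputable def gperm {n : ℕ} (p : Fin (n+1)) (σ : Equiv.Perm (Fin n)) :
    Equiv.Perm (Fin (n+1)) :=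
  Equiv.ofBijective (gfun p σ) (Finite.injective_iff_bijective.1 (gfun_injective p σ))

@[simp] lemma gperm_last {n : ℕ} (p : Fin (n+1)) (σ : Equiv.Perm (Fin n)) :
    gperm p σ (Fin.last n) = p := by simp [gperm, Equiv.ofBijective_apply]

@[simp] lemma gperm_castSucc {n : ℕ} (p : Fin (n+1)) (σ : Equiv.Perm (Fin n)) (j : Fin n) :
    gperm p σ j.castSucc = p.succAbove (σ j) := by simp [gperm, Equiv.ofBijective_apply]

lemma isRecord_gperm_castSucc {n : ℕ} (p : Fin (n+1)) (σ : Equiv.Perm (Fin n)) (j : Fin n) :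
    IsRecordPos (gperm p σ) j.castSucc ↔ IsRecordPos σ j := by
  constructor
  · intro h i hij
    have := h i.castSucc (by simpa using hij)
    simpa [Fin.succAbove_lt_succAbove_iff] using this
  · intro h i hi
    induction i using Fin.lastCases with
    | last => exact absurd hi (Fin.castSucc_lt_last j).asymm
    | cast i =>
      have : i < j := by simpa using hi
      simpa [Fin.succAbove_lt_succAbove_iff] using h i this

lemma isRecord_gperm_last {n : ℕ} (p : Fin (n+1)) (σ : Equiv.Perm (Fin n)) :
    IsRecordPos (gperm p σ) (Fin.last n) ↔ p = Fin.last n := by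
  constructor
  · intro h
    by_contra hp
    obtain ⟨z, hz⟩ := Fin.exists_succAbove_eq (Ne.symm hp)
    have := h (σ.symm z).castSucc (Fin.castSucc_lt_last _)
    rw [gperm_castSucc, gperm_last, Equiv.apply_symm_apply, hz] at this
    exact absurd this (not_lt.2 (Fin.le_last p))
  · rintro rfl i hi
    induction i using Fin.lastCases with
    | last => exact absurd hi (lt_irrefl _)
    | cast i =>
      rw [gperm_castSucc, gperm_last, Fin.succAbove_last]
      exact Fin.castSucc_lt_last _

lemma recSet_gperm_eq_iff {n : ℕ} (p : Fin (n+1)) (σ : Equiv.Perm (Fin n))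
    (V : Finset (Fin (n+1))) :
    recSet (gperm p σ) = V ↔
      ((p = Fin.last n ↔ Fin.last n ∈ V) ∧
        recSet σ = V.preimage Fin.castSucc (Fin.castSucc_injective n).injOn) := by
  constructor
  · intro h
    refine ⟨by rw [← h, mem_recSet, isRecord_gperm_last], ?_⟩
    ext j
    rw [mem_recSet, Finset.mem_preimage, ← h, mem_recSet, isRecord_gperm_castSucc]
  · rintro ⟨h1, h2⟩
    ext x
    induction x using Fin.lastCases with
    | last => rw [mem_recSet, isRecord_gperm_last, h1]
    | cast x =>
      rw [mem_recSet, isRecord_gperm_castSucc, ← mem_recSet, h2, Finset.mem_preimage]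

lemma gpair_injective {n : ℕ} :
    Function.Injective (fun pr : Fin (n+1) × Equiv.Perm (Fin n) => gperm pr.1 pr.2) := by
  rintro ⟨p, σ⟩ ⟨q, τ⟩ h
  simp only at h
  have hp : p = q := by
    have := congrArg (fun e : Equiv.Perm (Fin (n+1)) => e (Fin.last n)) h
    simpa using this
  subst hp
  have hσ : σ = τ := by
    ext j
    have := congrArg (fun e : Equiv.Perm (Fin (n+1)) => e j.castSucc) h
    simp only [gperm_castSucc] at this
    exact congrArg Fin.val (Fin.succAbove_right_injective this)
  rw [hσ]

lemma gpair_bijective {n : ℕ} :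
    Function.Bijective (fun pr : Fin (n+1) × Equiv.Perm (Fin n) => gperm pr.1 pr.2) := by
  rw [Fintype.bijective_iff_injective_and_card]
  refine ⟨gpair_injective, ?_⟩
  simp [Fintype.card_perm, Nat.factorial_succ]

lemma NV_succ (n : ℕ) (V : Finset (Fin (n+1))) :
    NV (n+1) V = (if Fin.last n ∈ V then 1 else n) *
      NV n (V.preimage Fin.castSucc (Fin.castSucc_injective n).injOn) := by
  classical
  have key : NV (n+1) V =
      (Finset.univ.filter (fun pr : Fin (n+1) × Equiv.Perm (Fin n) =>
        recSet (gperm pr.1 pr.2) = V)).card := by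
    rw [NV, ← Fintype.card_subtype, ← Fintype.card_subtype]
    exact Fintype.card_congr
      ((Equiv.subtypeEquiv (Equiv.ofBijective _ (gpair_bijective (n := n)))
        (fun pr => by simp [Equiv.ofBijective_apply])).symm)
  rw [key]
  have hfil : (Finset.univ.filter (fun pr : Fin (n+1) × Equiv.Perm (Fin n) =>
        recSet (gperm pr.1 pr.2) = V)) =
      (Finset.univ.filter (fun p : Fin (n+1) => p = Fin.last n ↔ Fin.last n ∈ V)) ×ˢ
      (Finset.univ.filter (fun σ : Equiv.Perm (Fin n) =>
        recSet σ = V.preimage Fin.castSucc (Fin.castSucc_injective n).injOn)) := by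
    rw [← Finset.filter_product, ← Finset.univ_product_univ]
    apply Finset.filter_congr
    intro pr _
    simp only [recSet_gperm_eq_iff]
  rw [hfil, Finset.card_product, ← NV]
  congr 1
  by_cases h : Fin.last n ∈ V
  · simp only [h, iff_true]
    rw [Finset.filter_eq']
    simp
  · simp only [h, iff_false]
    have : (Finset.univ.filter (fun p : Fin (n+1) => ¬ p = Fin.last n)) =
        Finset.univ.erase (Fin.last n) := by
      ext x; simp [Finset.mem_erase, and_comm]
    rw [this, Finset.card_erase_of_mem (Finset.mem_univ _)]
    simp

lemma isRecordPos_zero {n : ℕ} (σ : Equiv.Perm (Fin (n+1))) : IsRecordPos σ 0 := by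
  intro i hi
  exact absurd hi (Fin.not_lt_zero i)

lemma NV_eq_zero {n : ℕ} (V : Finset (Fin (n+1))) (h : (0 : Fin (n+1)) ∉ V) :
    NV (n+1) V = 0 := by
  rw [NV, Finset.card_eq_zero, Finset.filter_eq_empty_iff]
  intro σ _ hEq
  exact h (hEq ▸ mem_recSet.2 (isRecordPos_zero σ))

lemma NV_formula : ∀ n : ℕ, ∀ V : Finset (Fin (n+1)), (0 : Fin (n+1)) ∈ V →
    NV (n+1) V = ∏ j ∈ Vᶜ, (j : ℕ) := by
  intro n
  induction n with
  | zero =>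
    intro V hV
    have hVu : V = Finset.univ := by
      apply Finset.eq_univ_iff_forall.2
      intro x
      have hx := x.isLt
      have : x = 0 := Fin.ext (by omega)
      rwa [this]
    subst hVu
    rw [Finset.compl_univ, Finset.prod_empty, NV]
    rw [Finset.filter_true_of_mem, Finset.card_univ]
    · simp [Fintype.card_perm]
    · intro σ _
      apply Finset.eq_univ_iff_forall.2
      intro x
      have hx := x.isLt
      have : x = 0 := Fin.ext (by omega)
      rw [this]
      exact mem_recSet.2 (isRecordPos_zero σ)
  | succ n IH =>
    intro V hV
    rw [NV_succ]
    have h0' : (0 : Fin (n+1)) ∈ V.preimage Fin.castSucc (Fin.castSucc_injective _).injOn := by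
      rw [Finset.mem_preimage, Fin.castSucc_zero]
      exact hV
    rw [IH _ h0']
    -- complement preimage identity
    have hcompl : (V.preimage Fin.castSucc (Fin.castSucc_injective _).injOn)ᶜ =
        Vᶜ.preimage Fin.castSucc (Fin.castSucc_injective _).injOn := by
      ext j
      simp [Finset.mem_preimage]
    rw [hcompl]
    by_cases h : Fin.last (n+1) ∈ V
    · simp only [h, if_true, one_mul]
      have hcoe : ∏ j ∈ Vᶜ.preimage Fin.castSucc (Fin.castSucc_injective _).injOn, (j : ℕ) =
          ∏ j ∈ Vᶜ.preimage Fin.castSucc (Fin.castSucc_injective _).injOn,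
            ((Fin.castSucc j : Fin (n+2)) : ℕ) :=
        Finset.prod_congr rfl (fun j _ => (Fin.coe_castSucc j).symm)
      rw [hcoe, Finset.prod_preimage]
      intro x hx hxr
      exfalso
      rw [Fin.range_castSucc] at hxr
      have h1 := x.isLt
      simp at hxr
      have hxl : x = Fin.last (n+1) := Fin.ext (by rw [Fin.val_last]; omega)
      rw [hxl] at hx
      exact (Finset.mem_compl.1 hx) h
    · simp only [h, if_false]
      have hlast : Fin.last (n+1) ∈ Vᶜ := Finset.mem_compl.2 h
      rw [← Finset.mul_prod_erase _ _ hlast]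
      have herase : Vᶜ.preimage Fin.castSucc (Fin.castSucc_injective _).injOn =
          (Vᶜ.erase (Fin.last (n+1))).preimage Fin.castSucc (Fin.castSucc_injective _).injOn := by
        ext j
        simp only [Finset.mem_preimage, Finset.mem_erase]
        constructor
        · intro hj
          exact ⟨(Fin.castSucc_lt_last j).ne, hj⟩
        · exact fun hj => hj.2
      rw [herase]
      rw [Fin.val_last]
      congr 1
      have hcoe : ∏ j ∈ (Vᶜ.erase (Fin.last (n+1))).preimage Fin.castSucc
            (Fin.castSucc_injective _).injOn, (j : ℕ) =
          ∏ j ∈ (Vᶜ.erase (Fin.last (n+1))).preimage Fin.castSucc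
            (Fin.castSucc_injective _).injOn, ((Fin.castSucc j : Fin (n+2)) : ℕ) :=
        Finset.prod_congr rfl (fun j _ => (Fin.coe_castSucc j).symm)
      rw [hcoe, Finset.prod_preimage]
      intro x hx hxr
      exfalso
      rw [Fin.range_castSucc] at hxr
      have h1 := x.isLt
      simp at hxr
      have hxl : x = Fin.last (n+1) := Fin.ext (by rw [Fin.val_last]; omega)
      rw [hxl] at hx
      exact (Finset.mem_erase.1 hx).1 rfl


lemma srec_eq_sum_recSet {n : ℕ} (σ : Equiv.Perm (Fin n)) :
    srec σ = ∑ v ∈ recSet σ, (v.1 + 1) := rfl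

lemma srecCount_eq_sum (n k : ℕ) :
    srecCount n k =
      ∑ V ∈ Finset.univ.filter (fun V : Finset (Fin n) => ∑ v ∈ V, (v.1 + 1) = k), NV n V := by
  classical
  rw [srecCount]
  rw [Finset.card_eq_sum_card_fiberwise (f := recSet)
    (t := Finset.univ.filter (fun V : Finset (Fin n) => ∑ v ∈ V, (v.1 + 1) = k))]
  · apply Finset.sum_congr rfl
    intro V hV
    rw [Finset.mem_filter] at hV
    rw [NV, Finset.filter_filter]
    congr 1
    apply Finset.filter_congr
    intro σ _
    constructor
    · exact fun h => h.2
    · intro h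
      refine ⟨?_, h⟩
      rw [srec_eq_sum_recSet, h]
      exact hV.2
  · intro σ hσ
    rw [Finset.mem_coe, Finset.mem_filter] at hσ ⊢
    exact ⟨Finset.mem_univ _, by rw [← srec_eq_sum_recSet]; exact hσ.2⟩

lemma prod_univ_fin (n : ℕ) : ∏ j : Fin n, (j.1 + 1) = n.factorial := by
  rw [Fin.prod_univ_eq_prod_range (fun i => i + 1)]
  exact Finset.prod_range_add_one_eq_factorial n

lemma nat_ratio (n : ℕ) (hn : 1 ≤ n) :
    ∀ D : Finset ℕ, D ⊆ Finset.Icc 2 n → ∏ j ∈ D, j ≤ n * ∏ j ∈ D, (j - 1) := by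
  induction n, hn using Nat.le_induction with
  | base =>
    intro D hD
    have : D = ∅ := Finset.subset_empty.1 (by simpa using hD)
    subst this
    simp
  | succ n hn IH =>
    intro D hD
    by_cases h : n + 1 ∈ D
    · have hD' : D.erase (n+1) ⊆ Finset.Icc 2 n := by
        intro x hx
        rw [Finset.mem_erase] at hx
        have := hD hx.2
        rw [Finset.mem_Icc] at this ⊢
        exact ⟨this.1, by have := hx.1; omega⟩
      rw [← Finset.insert_erase h, Finset.prod_insert (Finset.notMem_erase _ _),
        Finset.prod_insert (Finset.notMem_erase _ _)]
      have hIH := IH _ hD'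
      calc (n+1) * ∏ j ∈ D.erase (n+1), j ≤ (n+1) * (n * ∏ j ∈ D.erase (n+1), (j-1)) :=
            Nat.mul_le_mul_left _ hIH
        _ = (n+1) * ((n+1-1) * ∏ j ∈ D.erase (n+1), (j-1)) := by norm_num
    · have hD' : D ⊆ Finset.Icc 2 n := by
        intro x hx
        have hx2 := hD hx
        rw [Finset.mem_Icc] at hx2 ⊢
        have : x ≠ n + 1 := fun he => h (he ▸ hx)
        omega
      calc ∏ j ∈ D, j ≤ n * ∏ j ∈ D, (j-1) := IH _ hD'
        _ ≤ (n+1) * ∏ j ∈ D, (j-1) := Nat.mul_le_mul_right _ (by omega)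

lemma prod_fin_le (n : ℕ) (hn : 1 ≤ n) (C : Finset (Fin n)) (hC : ∀ v ∈ C, v.1 ≠ 0) :
    ∏ v ∈ C, (v.1 + 1) ≤ n * ∏ v ∈ C, v.1 := by
  have hinj : ∀ x ∈ C, ∀ y ∈ C, x.1 + 1 = y.1 + 1 → x = y := by
    intro x _ y _ h
    exact Fin.ext (by omega)
  have h1 : ∏ j ∈ C.image (fun v : Fin n => v.1 + 1), j = ∏ v ∈ C, (v.1 + 1) :=
    Finset.prod_image hinj
  have h2 : ∏ j ∈ C.image (fun v : Fin n => v.1 + 1), (j - 1) = ∏ v ∈ C, v.1 := by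
    rw [Finset.prod_image hinj]
    simp
  have hsub : C.image (fun v : Fin n => v.1 + 1) ⊆ Finset.Icc 2 n := by
    intro x hx
    rw [Finset.mem_image] at hx
    obtain ⟨v, hv, rfl⟩ := hx
    rw [Finset.mem_Icc]
    have := v.isLt
    have := hC v hv
    omega
  calc ∏ v ∈ C, (v.1 + 1) = ∏ j ∈ C.image (fun v : Fin n => v.1 + 1), j := h1.symm
    _ ≤ n * ∏ j ∈ C.image (fun v : Fin n => v.1 + 1), (j - 1) := nat_ratio n hn _ hsub
    _ = n * ∏ v ∈ C, v.1 := by rw [h2]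

lemma exists_B (n : ℕ) (hn : 4 ≤ n) : ∀ t : ℕ, t ≤ n*(n+1)/2 - 1 → t ≠ 1 →
    t ≠ n*(n+1)/2 - 2 → ∃ B : Finset ℕ, B ⊆ Finset.Icc 2 n ∧ ∑ b ∈ B, b = t := by
  induction n, hn using Nat.le_induction with
  | base =>
    intro t ht h1 h2
    have h10 : 4*(4+1)/2 = 10 := by norm_num
    rw [h10] at ht h2
    interval_cases t
    · exact ⟨∅, by decide, by decide⟩
    · omega
    · exact ⟨{2}, by decide, by decide⟩
    · exact ⟨{3}, by decide, by decide⟩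
    · exact ⟨{4}, by decide, by decide⟩
    · exact ⟨{2,3}, by decide, by decide⟩
    · exact ⟨{2,4}, by decide, by decide⟩
    · exact ⟨{3,4}, by decide, by decide⟩
    · omega
    · exact ⟨{2,3,4}, by decide, by decide⟩
  | succ n hn IH =>
    intro t ht h1 h2
    obtain ⟨c, hc⟩ := Nat.even_mul_succ_self n
    have hrel : (n+1)*(n+1+1) = n*(n+1) + 2*(n+1) := by ring
    have hge : n*5 ≤ n*(n+1) := Nat.mul_le_mul_left n (by omega)
    by_cases hcase : t ≤ c - 1 ∧ t ≠ c - 2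
    · obtain ⟨B, hB, hs⟩ := IH t (by omega) h1 (by omega)
      exact ⟨B, hB.trans (Finset.Icc_subset_Icc_right (by omega)), hs⟩
    · push_neg at hcase
      obtain ⟨B, hB, hs⟩ := IH (t - (n+1)) (by omega) (by omega) (by omega)
      have hnot : n+1 ∉ B := fun hmem => by
        have := hB hmem; rw [Finset.mem_Icc] at this; omega
      refine ⟨insert (n+1) B, ?_, ?_⟩
      · intro x hx
        rw [Finset.mem_insert] at hx
        rw [Finset.mem_Icc]
        rcases hx with rfl | hx
        · omega
        · have := hB hx; rw [Finset.mem_Icc] at this; omega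
      · rw [Finset.sum_insert hnot, hs]
        omega

lemma exists_A (n k : ℕ) (hn : 1 ≤ n) (hk1 : 1 ≤ k) (hk2 : k ≤ n*(n+1)/2) (hk3 : k ≠ 2)
    (hk4 : k ≠ n*(n+1)/2 - 1) :
    ∃ A : Finset ℕ, A ⊆ Finset.Icc 1 n ∧ 1 ∈ A ∧ ∑ a ∈ A, a = k := by
  match n, hn with
  | 1, _ =>
    have : k = 1 := by norm_num at hk2; omega
    subst this
    exact ⟨{1}, by decide, by decide, by decide⟩
  | 2, _ =>
    have h3 : (2*(2+1)/2 : ℕ) = 3 := by norm_num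
    rw [h3] at hk2 hk4
    have : k = 1 ∨ k = 3 := by omega
    rcases this with rfl | rfl
    · exact ⟨{1}, by decide, by decide, by decide⟩
    · exact ⟨{1,2}, by decide, by decide, by decide⟩
  | 3, _ =>
    have h6 : (3*(3+1)/2 : ℕ) = 6 := by norm_num
    rw [h6] at hk2 hk4
    interval_cases k
    · exact ⟨{1}, by decide, by decide, by decide⟩
    · omega
    · exact ⟨{1,2}, by decide, by decide, by decide⟩
    · exact ⟨{1,3}, by decide, by decide, by decide⟩
    · omega
    · exact ⟨{1,2,3}, by decide, by decide, by decide⟩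
  | (m+4), _ =>
    set n := m + 4 with hndef
    have hn4 : 4 ≤ n := by omega
    rcases eq_or_lt_of_le hk1 with rfl | hk1'
    · exact ⟨{1}, by
        intro x hx
        rw [Finset.mem_singleton] at hx
        rw [Finset.mem_Icc]
        omega, by decide, by decide⟩
    · obtain ⟨c, hc⟩ := Nat.even_mul_succ_self n
      have hge : n*4 ≤ n*(n+1) := Nat.mul_le_mul_left n (by omega)
      obtain ⟨B, hB, hs⟩ := exists_B n hn4 (k - 1) (by omega) (by omega) (by omega)
      have hnot : 1 ∉ B := fun hmem => by
        have := hB hmem; rw [Finset.mem_Icc] at this; omega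
      refine ⟨insert 1 B, ?_, Finset.mem_insert_self _ _, ?_⟩
      · intro x hx
        rw [Finset.mem_insert] at hx
        rw [Finset.mem_Icc]
        rcases hx with rfl | hx
        · omega
        · have := hB hx; rw [Finset.mem_Icc] at this; omega
      · rw [Finset.sum_insert hnot, hs]
        omega


lemma mProdSet_nonempty (n k : ℕ) (hn : 1 ≤ n) (hk1 : 1 ≤ k) (hk2 : k ≤ n*(n+1)/2)
    (hk3 : k ≠ 2) (hk4 : k ≠ n*(n+1)/2 - 1) :
    {p : ℕ | ∃ V : Finset (Fin n), (∃ v ∈ V, v.1 = 0) ∧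
      (∑ v ∈ V, (v.1 + 1) = k) ∧ p = ∏ v ∈ V, (v.1 + 1)}.Nonempty := by
  obtain ⟨A, hA, h1A, hsum⟩ := exists_A n k hn hk1 hk2 hk3 hk4
  have hbound : ∀ a ∈ A, a - 1 < n := by
    intro a ha
    have := hA ha
    rw [Finset.mem_Icc] at this
    omega
  have hge1 : ∀ a ∈ A, 1 ≤ a := by
    intro a ha
    have := hA ha
    rw [Finset.mem_Icc] at this
    omega
  classical
  set V : Finset (Fin n) := A.attach.image
    (fun a => (⟨a.1 - 1, hbound a.1 a.2⟩ : Fin n)) with hVdef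
  have hinjA : ∀ x ∈ A.attach, ∀ y ∈ A.attach,
      (⟨x.1 - 1, hbound x.1 x.2⟩ : Fin n) = (⟨y.1 - 1, hbound y.1 y.2⟩ : Fin n) → x = y := by
    intro x hx y hy h
    have hx1 := hge1 x.1 x.2
    have hy1 := hge1 y.1 y.2
    have := congrArg Fin.val h
    simp only at this
    exact Subtype.ext (by omega)
  refine ⟨∏ v ∈ V, (v.1 + 1), V, ?_, ?_, rfl⟩
  · refine ⟨⟨0, by omega⟩, ?_, rfl⟩
    rw [hVdef, Finset.mem_image]
    exact ⟨⟨1, h1A⟩, Finset.mem_attach _ _, by simp⟩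
  · rw [hVdef, Finset.sum_image hinjA]
    have : ∀ x ∈ A.attach, (⟨x.1 - 1, hbound x.1 x.2⟩ : Fin n).1 + 1 = x.1 := by
      intro x _
      have := hge1 x.1 x.2
      simp only
      omega
    rw [Finset.sum_congr rfl this]
    rw [← hsum]
    exact Finset.sum_attach A id

/-- `1/(n·m(n,k)) ≤ P(srec = k) ≤ 2^n/m(n,k)`. -/
theorem prob_srec_bounds (n k : ℕ) (hn : 1 ≤ n) (hk1 : 1 ≤ k)
    (hk2 : k ≤ n * (n + 1) / 2) (hk3 : k ≠ 2) (hk4 : k ≠ n * (n + 1) / 2 - 1) :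
    (1 : ℝ) / ((n : ℝ) * mProd n k) ≤ (srecCount n k : ℝ) / Nat.factorial n ∧
      (srecCount n k : ℝ) / Nat.factorial n ≤ (2 : ℝ) ^ n / mProd n k := by
  classical
  have hS := mProdSet_nonempty n k hn hk1 hk2 hk3 hk4
  have hmem := Nat.sInf_mem hS
  obtain ⟨V₀, hV₀0, hV₀sum, hV₀prod⟩ := hmem
  have hm_pos : 0 < mProd n k := by
    rw [mProd, hV₀prod]
    exact Finset.prod_pos (fun v _ => Nat.succ_pos _)
  obtain ⟨m, rfl⟩ : ∃ m, n = m + 1 := ⟨n - 1, by omega⟩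
  have h0V₀ : (0 : Fin (m+1)) ∈ V₀ := by
    obtain ⟨v, hv, hv0⟩ := hV₀0
    have : v = 0 := Fin.ext hv0
    rwa [this] at hv
  -- ℕ upper bound : srecCount * mProd ≤ 2^(m+1) * (m+1)!
  have hupper : srecCount (m+1) k * mProd (m+1) k ≤ 2^(m+1) * (m+1).factorial := by
    rw [srecCount_eq_sum, Finset.sum_mul]
    have hterm : ∀ V ∈ Finset.univ.filter
        (fun V : Finset (Fin (m+1)) => ∑ v ∈ V, (v.1 + 1) = k),
        NV (m+1) V * mProd (m+1) k ≤ (m+1).factorial := by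
      intro V hV
      rw [Finset.mem_filter] at hV
      by_cases h0 : (0 : Fin (m+1)) ∈ V
      · have hform := NV_formula m V h0
        have hmle : mProd (m+1) k ≤ ∏ v ∈ V, (v.1 + 1) :=
          Nat.sInf_le ⟨V, ⟨0, h0, rfl⟩, hV.2, rfl⟩
        calc NV (m+1) V * mProd (m+1) k ≤ NV (m+1) V * ∏ v ∈ V, (v.1 + 1) :=
              Nat.mul_le_mul_left _ hmle
          _ = (∏ j ∈ Vᶜ, (j : ℕ)) * ∏ v ∈ V, (v.1 + 1) := by rw [hform]
          _ ≤ (∏ j ∈ Vᶜ, ((j : ℕ) + 1)) * ∏ v ∈ V, (v.1 + 1) :=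
              Nat.mul_le_mul_right _ (Finset.prod_le_prod' (fun j _ => Nat.le_succ _))
          _ = ∏ v : Fin (m+1), (v.1 + 1) := by
              rw [mul_comm]
              exact Finset.prod_mul_prod_compl V _
          _ = (m+1).factorial := prod_univ_fin (m+1)
      · rw [NV_eq_zero V h0]
        simp
    calc ∑ V ∈ Finset.univ.filter
          (fun V : Finset (Fin (m+1)) => ∑ v ∈ V, (v.1 + 1) = k),
          NV (m+1) V * mProd (m+1) k
        ≤ (Finset.univ.filter
            (fun V : Finset (Fin (m+1)) => ∑ v ∈ V, (v.1 + 1) = k)).card *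
          (m+1).factorial := by
          rw [← smul_eq_mul]
          exact Finset.sum_le_card_nsmul _ _ _ hterm
      _ ≤ 2^(m+1) * (m+1).factorial := by
          apply Nat.mul_le_mul_right
          calc (Finset.univ.filter
              (fun V : Finset (Fin (m+1)) => ∑ v ∈ V, (v.1 + 1) = k)).card
              ≤ (Finset.univ : Finset (Finset (Fin (m+1)))).card :=
                Finset.card_filter_le _ _
            _ = 2^(m+1) := by simp [Finset.card_univ]
  -- ℕ lower bound : (m+1)! ≤ srecCount * ((m+1) * mProd)
  have hlow1 : (m+1).factorial ≤ NV (m+1) V₀ * ((m+1) * mProd (m+1) k) := by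
    have hC : ∀ v ∈ V₀ᶜ, v.1 ≠ 0 := by
      intro v hv hv0
      rw [Finset.mem_compl] at hv
      have hveq : v = 0 := Fin.ext (by simp [hv0])
      exact hv (hveq ▸ h0V₀)
    have hratio := prod_fin_le (m+1) (by omega) V₀ᶜ hC
    have hform := NV_formula m V₀ h0V₀
    calc (m+1).factorial = ∏ v : Fin (m+1), (v.1 + 1) := (prod_univ_fin (m+1)).symm
      _ = (∏ v ∈ V₀, (v.1 + 1)) * ∏ v ∈ V₀ᶜ, (v.1 + 1) :=
          (Finset.prod_mul_prod_compl V₀ _).symm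
      _ ≤ (∏ v ∈ V₀, (v.1 + 1)) * ((m+1) * ∏ v ∈ V₀ᶜ, v.1) :=
          Nat.mul_le_mul_left _ hratio
      _ = NV (m+1) V₀ * ((m+1) * mProd (m+1) k) := by
          rw [hform, mProd, hV₀prod]
          ring
  have hlow2 : NV (m+1) V₀ ≤ srecCount (m+1) k := by
    rw [srecCount_eq_sum]
    apply Finset.single_le_sum (fun V _ => Nat.zero_le (NV (m+1) V))
    rw [Finset.mem_filter]
    exact ⟨Finset.mem_univ _, hV₀sum⟩
  have hlower : (m+1).factorial ≤ srecCount (m+1) k * ((m+1) * mProd (m+1) k) :=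
    hlow1.trans (Nat.mul_le_mul_right _ hlow2)
  -- pass to ℝ
  have hfac_pos : (0 : ℝ) < ((m+1).factorial : ℝ) := by
    exact_mod_cast (m+1).factorial_pos
  have hm_posR : (0 : ℝ) < (mProd (m+1) k : ℝ) := by exact_mod_cast hm_pos
  have hnm_pos : (0 : ℝ) < ((m+1 : ℕ) : ℝ) * (mProd (m+1) k : ℝ) := by
    apply mul_pos _ hm_posR
    exact_mod_cast Nat.succ_pos m
  constructor
  · rw [div_le_div_iff₀ hnm_pos hfac_pos]
    have : ((m+1).factorial : ℝ) ≤ (srecCount (m+1) k : ℝ) *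
        (((m+1 : ℕ) : ℝ) * (mProd (m+1) k : ℝ)) := by
      exact_mod_cast hlower
    linarith
  · rw [div_le_div_iff₀ hfac_pos hm_posR]
    exact_mod_cast hupper
end

section
/- For integers 3 ≤ k ≤ n, the number C(n,k) of permutations of S_n whose record positions sum to k satisfies n!/((k−1)·n) ≤ C(n,k) ≤ 2^n · n!/(k−1). -/
/-- If the max is at (0-indexed) position `k-2` and position `0` carries the
largest value among the first `k-2` positions, then `srec σ = k`. -/
lemma srec_eq_of (n k : ℕ) (hk3 : 3 ≤ k) (hkn : k ≤ n) (σ : Equiv.Perm (Fin n))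
    (p z M : Fin n) (hpv : (p : ℕ) = k - 2) (hzv : (z : ℕ) = 0)
    (hMv : (M : ℕ) = n - 1) (h1 : σ p = M)
    (h2 : ∀ i : Fin n, 0 < (i : ℕ) → (i : ℕ) < k - 2 → σ i < σ z) :
    srec σ = k := by
  have hn3 : 3 ≤ n := le_trans hk3 hkn
  have hfilter : Finset.univ.filter (fun j => IsRecordPos σ j) = {z, p} := by
    ext j
    simp only [Finset.mem_filter, Finset.mem_univ, true_and, Finset.mem_insert,
      Finset.mem_singleton]
    constructor
    · intro hrec
      rcases Nat.lt_trichotomy (j : ℕ) (k - 2) with hlt | heq | hgt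
      · rcases Nat.eq_zero_or_pos (j : ℕ) with h0 | h0
        · left; exact Fin.ext (by omega)
        · exfalso
          have hzj : z < j := by rw [Fin.lt_def, hzv]; exact h0
          have hr := hrec z hzj
          have := h2 j h0 hlt
          exact absurd this (not_lt.mpr (le_of_lt hr))
      · right; exact Fin.ext (by omega)
      · exfalso
        have hpj : p < j := by rw [Fin.lt_def, hpv]; exact hgt
        have hlt' := hrec p hpj
        rw [h1, Fin.lt_def, hMv] at hlt'
        have : (σ j : ℕ) < n := (σ j).isLt
        omega
    · have hrz : IsRecordPos σ z := by
        intro i hi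
        exfalso
        rw [Fin.lt_def, hzv] at hi
        omega
      have hrp : IsRecordPos σ p := by
        intro i hi
        have hne : σ i ≠ σ p := fun h => absurd (σ.injective h) (ne_of_lt hi)
        have hle : (σ i : ℕ) < n := (σ i).isLt
        have hne' : (σ i : ℕ) ≠ n - 1 := by
          intro h
          exact hne (by rw [h1]; exact Fin.ext (by rw [h, hMv]))
        rw [h1, Fin.lt_def, hMv]
        omega
      rintro (rfl | rfl)
      · exact hrz
      · exact hrp
  have hzp : z ≠ p := by
    intro h
    rw [h] at hzv
    omega
  rw [srec, hfilter, Finset.sum_pair hzp, hzv, hpv]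
  omega

lemma key_lower (n k : ℕ) (hk3 : 3 ≤ k) (hkn : k ≤ n) :
    Nat.factorial n ≤ srecCount n k * ((k - 1) * n) := by
  classical
  have hn3 : 3 ≤ n := le_trans hk3 hkn
  obtain ⟨p, hpv⟩ : ∃ p : Fin n, (p : ℕ) = k - 2 := ⟨⟨k - 2, by omega⟩, rfl⟩
  obtain ⟨z, hzv⟩ : ∃ z : Fin n, (z : ℕ) = 0 := ⟨⟨0, by omega⟩, rfl⟩
  obtain ⟨M, hMv⟩ : ∃ M : Fin n, (M : ℕ) = n - 1 := ⟨⟨n - 1, by omega⟩, rfl⟩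
  have hzp : z ≠ p := fun h => by rw [h] at hzv; omega
  set A : Finset (Equiv.Perm (Fin n)) :=
    Finset.univ.filter (fun σ => σ p = M) with hA
  -- Step 1 : n! ≤ A.card * n
  have step1 : Nat.factorial n ≤ A.card * n := by
    have hmaps : ∀ σ ∈ (Finset.univ : Finset (Equiv.Perm (Fin n))),
        (Equiv.swap (σ p) M * σ, ((σ p : ℕ))) ∈ A ×ˢ Finset.range n := by
      intro σ _
      simp only [Finset.mem_product, Finset.mem_range, hA, Finset.mem_filter,
        Finset.mem_univ, true_and]
      exact ⟨by simp [Equiv.Perm.mul_apply], (σ p).isLt⟩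
    have hcard := Finset.card_le_card_of_injOn
      (fun σ => (Equiv.swap (σ p) M * σ, ((σ p : ℕ)))) hmaps ?_
    · calc Nat.factorial n = (Finset.univ : Finset (Equiv.Perm (Fin n))).card := by
            rw [Finset.card_univ, Fintype.card_perm, Fintype.card_fin]
        _ ≤ (A ×ˢ Finset.range n).card := hcard
        _ = A.card * n := by rw [Finset.card_product, Finset.card_range]
    · intro σ₁ _ σ₂ _ h
      simp only [Prod.mk.injEq] at h
      obtain ⟨h1, h2⟩ := h
      have hpp : σ₁ p = σ₂ p := Fin.ext h2
      rw [hpp] at h1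
      exact mul_left_cancel h1
  -- argmax over the first k-2 positions
  have hmax : ∀ σ : Equiv.Perm (Fin n), ∃ m : Fin n, (m : ℕ) < k - 2 ∧
      ∀ i : Fin n, (i : ℕ) < k - 2 → σ i ≤ σ m := by
    intro σ
    have hBne : (Finset.univ.filter (fun i : Fin n => (i : ℕ) < k - 2)).Nonempty :=
      ⟨z, by simp only [Finset.mem_filter, Finset.mem_univ, true_and]; omega⟩
    obtain ⟨m, hm, hmx⟩ := Finset.exists_max_image _ (fun i => σ i) hBne
    simp only [Finset.mem_filter, Finset.mem_univ, true_and] at hm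
    exact ⟨m, hm, fun i hi => hmx i (by
      simp only [Finset.mem_filter, Finset.mem_univ, true_and]; exact hi)⟩
  choose mfun hm1 hm2 using hmax
  -- Step 2 : A.card ≤ srecCount n k * (k - 2)
  have step2 : A.card ≤ srecCount n k * (k - 2) := by
    have hmaps : ∀ σ ∈ A,
        (σ * Equiv.swap z (mfun σ), ((mfun σ : ℕ))) ∈
          (Finset.univ.filter (fun τ : Equiv.Perm (Fin n) => srec τ = k)) ×ˢ
            Finset.range (k - 2) := by
      intro σ hσ
      simp only [hA, Finset.mem_filter, Finset.mem_univ, true_and] at hσ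
      simp only [Finset.mem_product, Finset.mem_range, Finset.mem_filter,
        Finset.mem_univ, true_and]
      refine ⟨?_, hm1 σ⟩
      have hmp : mfun σ ≠ p := by
        intro h
        have := hm1 σ
        rw [h, hpv] at this
        omega
      apply srec_eq_of n k hk3 hkn _ p z M hpv hzv hMv
      · show σ (Equiv.swap z (mfun σ) p) = M
        rw [Equiv.swap_apply_of_ne_of_ne (fun h => hzp h.symm) (fun h => hmp h.symm)]
        exact hσ
      · intro i hi0 hik
        show σ (Equiv.swap z (mfun σ) i) < σ (Equiv.swap z (mfun σ) z)
        rw [Equiv.swap_apply_left]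
        have hiz : i ≠ z := by
          intro h; rw [h, hzv] at hi0; omega
        have hval : (Equiv.swap z (mfun σ) i : ℕ) < k - 2 := by
          rcases eq_or_ne i (mfun σ) with rfl | him
          · rw [Equiv.swap_apply_right]; omega
          · rw [Equiv.swap_apply_of_ne_of_ne hiz him]; exact hik
        have hle := hm2 σ _ hval
        have hne : σ (Equiv.swap z (mfun σ) i) ≠ σ (mfun σ) := by
          intro h
          have h' := σ.injective h
          have : i = z := (Equiv.swap z (mfun σ)).injective
            (by rw [h', Equiv.swap_apply_left])
          exact hiz this
        exact lt_of_le_of_ne hle hne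
    have hcard := Finset.card_le_card_of_injOn
      (fun σ => (σ * Equiv.swap z (mfun σ), ((mfun σ : ℕ)))) hmaps ?_
    · calc A.card
          ≤ ((Finset.univ.filter (fun τ : Equiv.Perm (Fin n) => srec τ = k)) ×ˢ
              Finset.range (k - 2)).card := hcard
        _ = srecCount n k * (k - 2) := by
            rw [Finset.card_product, Finset.card_range, srecCount]
    · intro σ₁ _ σ₂ _ h
      simp only [Prod.mk.injEq] at h
      obtain ⟨h1, h2⟩ := h
      have hmm : mfun σ₁ = mfun σ₂ := Fin.ext h2
      rw [hmm] at h1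
      exact mul_right_cancel h1
  calc Nat.factorial n ≤ A.card * n := step1
    _ ≤ srecCount n k * (k - 2) * n := Nat.mul_le_mul_right n step2
    _ ≤ srecCount n k * ((k - 1) * n) := by
        rw [mul_assoc]
        exact Nat.mul_le_mul_left _ (Nat.mul_le_mul_right n (by omega))

/-- For `3 ≤ k ≤ n`: `n!/((k-1)·n) ≤ C(n,k) ≤ 2^n·n!/(k-1)`. -/
theorem srecCount_bounds_small_k (n k : ℕ) (hk3 : 3 ≤ k) (hkn : k ≤ n) :
    (Nat.factorial n : ℝ) / (((k : ℝ) - 1) * n) ≤ (srecCount n k : ℝ) ∧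
      (srecCount n k : ℝ) ≤ (2 : ℝ) ^ n * Nat.factorial n / ((k : ℝ) - 1) := by
  have hn3 : 3 ≤ n := le_trans hk3 hkn
  have hk1 : (0 : ℝ) < (k : ℝ) - 1 := by
    have : (3 : ℝ) ≤ (k : ℝ) := by exact_mod_cast hk3
    linarith
  have hnpos : (0 : ℝ) < (n : ℝ) := by
    have : (3 : ℝ) ≤ (n : ℝ) := by exact_mod_cast hn3
    linarith
  have hcastk : ((k - 1 : ℕ) : ℝ) = (k : ℝ) - 1 := by
    have h1 : 1 ≤ k := by omega
    push_cast [h1]; ring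
  constructor
  · rw [div_le_iff₀ (by positivity)]
    calc (Nat.factorial n : ℝ) ≤ (srecCount n k : ℝ) * (((k - 1 : ℕ) : ℝ) * n) := by
          exact_mod_cast key_lower n k hk3 hkn
      _ = (srecCount n k : ℝ) * (((k : ℝ) - 1) * n) := by rw [hcastk]
  · rw [le_div_iff₀ hk1]
    have h1 : (srecCount n k : ℝ) ≤ (Nat.factorial n : ℝ) := by
      have : srecCount n k ≤ Nat.factorial n := by
        rw [srecCount]
        calc (Finset.univ.filter (fun σ : Equiv.Perm (Fin n) => srec σ = k)).card
            ≤ (Finset.univ : Finset (Equiv.Perm (Fin n))).card := Finset.card_filter_le _ _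
          _ = Nat.factorial n := by rw [Finset.card_univ, Fintype.card_perm, Fintype.card_fin]
      exact_mod_cast this
    have h2 : (k : ℝ) - 1 ≤ (2 : ℝ) ^ n := by
      have hnk : (k : ℝ) ≤ (n : ℝ) := by exact_mod_cast hkn
      have h2n : (n : ℝ) < (2 : ℝ) ^ n := by exact_mod_cast Nat.lt_two_pow_self (n := n)
      linarith
    calc (srecCount n k : ℝ) * ((k : ℝ) - 1)
        ≤ (Nat.factorial n : ℝ) * (2 : ℝ) ^ n :=
          mul_le_mul h1 h2 (le_of_lt hk1) (by positivity)
      _ = (2 : ℝ) ^ n * Nat.factorial n := by ring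
end

section
/- For integers n+1 ≤ k < n(n−1)/2, letting i_0 be the greatest integer with k − 1 ≥ n + (n−1) + ⋯ + (n−i_0), the minimum m(n,k) satisfies n!/(n−i_0−1)! ≤ m(n,k) ≤ e^n · n!/(n−i_0−1)!. -/
/-- Greedy-from-the-top lower bound function. -/
def Mfun : ℕ → ℕ → ℕ
  | _, 0 => 1
  | _, 1 => 2
  | 0, (_+2) => 0
  | (n+1), (s+2) =>
      if s + 2 ≤ n + 1 then s + 2
      else if s = n then 2 * n
      else (n+1) * Mfun n (s + 1 - n)

lemma Mfun_zero (m : ℕ) : Mfun m 0 = 1 := by cases m <;> rfl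
lemma Mfun_one (m : ℕ) : Mfun m 1 = 2 := by cases m <;> rfl

lemma Mfun_of_le {m s : ℕ} (h2 : 2 ≤ s) (h : s ≤ m) : Mfun m s = s := by
  obtain ⟨s', rfl⟩ : ∃ s', s = s' + 2 := ⟨s - 2, by omega⟩
  obtain ⟨m', rfl⟩ : ∃ m', m = m' + 1 := ⟨m - 1, by omega⟩
  simp only [Mfun, if_pos (by omega : s' + 2 ≤ m' + 1)]

lemma Mfun_succ {m : ℕ} (hm : 1 ≤ m) : Mfun m (m+1) = 2 * (m - 1) := by
  obtain ⟨m', rfl⟩ : ∃ m', m = m' + 1 := ⟨m - 1, by omega⟩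
  show Mfun (m'+1) (m' + 2) = 2 * m'
  simp [Mfun]

lemma Mfun_of_ge {m s : ℕ} (hm : 1 ≤ m) (h : m + 2 ≤ s) :
    Mfun m s = m * Mfun (m-1) (s - m) := by
  obtain ⟨s', rfl⟩ : ∃ s', s = s' + 2 := ⟨s - 2, by omega⟩
  obtain ⟨m', rfl⟩ : ∃ m', m = m' + 1 := ⟨m - 1, by omega⟩
  show Mfun (m'+1) (s' + 2) = (m'+1) * Mfun m' (s' + 2 - (m'+1))
  rw [Mfun]
  rw [if_neg (by omega), if_neg (by omega)]
  have h1 : s' + 1 - m' = s' + 2 - (m' + 1) := by omega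
  rw [h1]

/-- total sum of `[2, m]`. -/
def Ssum (m : ℕ) : ℕ := ∑ x ∈ Finset.Icc 2 m, x

lemma Ssum_le_one {m : ℕ} (h : m ≤ 1) : Ssum m = 0 := by
  interval_cases m <;> rfl

lemma Ssum_two : Ssum 2 = 2 := by simp [Ssum]

lemma Ssum_succ {m : ℕ} (h : 1 ≤ m) : Ssum (m + 1) = Ssum m + (m + 1) := by
  unfold Ssum
  rw [Finset.sum_Icc_succ_top (by omega)]

/-- product of a finset of naturals each `≥ 2` is at least its sum. -/
lemma prod_ge_sum (W : Finset ℕ) : (∀ w ∈ W, 2 ≤ w) →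
    (∑ w ∈ W, w) ≤ ∏ w ∈ W, w := by
  induction W using Finset.induction_on with
  | empty => simp
  | @insert a W ha ih =>
    intro hall
    rw [Finset.sum_insert ha, Finset.prod_insert ha]
    have ha2 : 2 ≤ a := hall a (Finset.mem_insert_self a W)
    have hW : ∀ w ∈ W, 2 ≤ w := fun w hw => hall w (Finset.mem_insert_of_mem hw)
    have hsum := ih hW
    rcases W.eq_empty_or_nonempty with rfl | ⟨w, hw⟩
    · simp
    · have h2 : 2 ≤ ∏ w ∈ W, w := by
        calc 2 ≤ w := hW w hw
          _ ≤ ∏ w ∈ W, w := Finset.single_le_prod' (fun i hi => by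
              show (1:ℕ) ≤ i; have := hW i hi; omega) hw
      have h4 : a + ∏ w ∈ W, w ≤ a * ∏ w ∈ W, w := by nlinarith
      omega

lemma prod_pos_aux (W : Finset ℕ) (h : ∀ w ∈ W, 2 ≤ w) : 1 ≤ ∏ w ∈ W, w :=
  Finset.one_le_prod' (fun i hi => by have := h i hi; omega)

lemma two_le_prod_aux (W : Finset ℕ) (h : ∀ w ∈ W, 2 ≤ w) (hne : W.Nonempty) :
    2 ≤ ∏ w ∈ W, w := by
  obtain ⟨w, hw⟩ := hne
  calc 2 ≤ w := h w hw
    _ ≤ ∏ w ∈ W, w := Finset.single_le_prod' (fun i hi => by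
        show (1:ℕ) ≤ i; have := h i hi; omega) hw

/-- `Mfun m s ≥ s` in the feasible range. -/
lemma Mfun_ge (m : ℕ) : ∀ s, 2 ≤ s → s ≤ Ssum m → s ≤ Mfun m s := by
  induction m with
  | zero => intro s h2 hf; rw [Ssum_le_one (by omega)] at hf; omega
  | succ m ih =>
    intro s h2 hf
    rcases le_or_gt s (m+1) with h | h
    · rw [Mfun_of_le h2 h]
    rcases eq_or_lt_of_le (Nat.succ_le_of_lt h) with h' | h'
    · -- s = m + 2
      have hs : s = (m+1) + 1 := by omega
      rw [hs, Mfun_succ (by omega)]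
      -- need m+2 ≤ 2*m, i.e. m ≥ 2
      have hm2 : 2 ≤ m := by
        by_contra hc
        push_neg at hc
        interval_cases m <;> simp_all [Ssum] <;> omega
      simp only [Nat.add_sub_cancel]
      omega
    · -- s ≥ m + 3
      have hm1 : 1 ≤ m := by
        by_contra hc
        push_neg at hc
        interval_cases m <;> simp_all [Ssum] <;> omega
      rw [Mfun_of_ge (by omega) (by omega)]
      have hfeas : s - (m+1) ≤ Ssum m := by
        rw [Ssum_succ hm1] at hf; omega
      have := ih (s - (m+1)) (by omega) hfeas
      simp only [Nat.add_sub_cancel]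
      have h3 : (m+1) * (s - (m+1)) ≤ (m+1) * Mfun m (s - (m+1)) :=
        Nat.mul_le_mul_left _ this
      have h4 : s ≤ (m+1) * (s - (m+1)) := by nlinarith [Nat.sub_add_cancel (le_of_lt h)]
      omega

/-- Key inequality: increasing the sum-budget by `c` while lowering the cap by one
gains at least a factor `(a+c)/a`. -/
lemma prop' : ∀ a : ℕ, ∀ c y : ℕ, 2 ≤ a → 1 ≤ c → (y = 0 ∨ 2 ≤ y) →
    y + c ≤ Ssum (a-1) → (a + c) * Mfun a y ≤ a * Mfun (a-1) (y + c) := by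
  intro a
  induction a using Nat.strong_induction_on with
  | _ a IH =>
    intro c y ha hc hy hf
    rcases hy with rfl | hy2
    · -- y = 0
      rw [Mfun_zero, mul_one]
      rcases eq_or_lt_of_le hc with rfl | hc2
      · rw [Mfun_one]; omega
      · have hMc : c ≤ Mfun (a-1) c := Mfun_ge (a-1) c (by omega) (by simpa using hf)
        have : a + c ≤ a * c := by nlinarith
        calc a + c ≤ a * c := this
          _ ≤ a * Mfun (a-1) c := Nat.mul_le_mul_left _ hMc
          _ = a * Mfun (a-1) (0 + c) := by rw [Nat.zero_add]
    rcases le_or_gt y a with hya | hya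
    · -- 2 ≤ y ≤ a
      rw [Mfun_of_le hy2 hya]
      have hM : y + c ≤ Mfun (a-1) (y + c) := Mfun_ge (a-1) (y+c) (by omega) hf
      calc (a + c) * y ≤ a * (y + c) := by nlinarith
        _ ≤ a * Mfun (a-1) (y + c) := Nat.mul_le_mul_left _ hM
    rcases eq_or_lt_of_le (Nat.succ_le_of_lt hya) with hyy | hyy
    · -- y = a + 1
      have hy' : y = a + 1 := hyy.symm
      subst hy'
      rw [Mfun_succ (by omega)]
      -- a ≥ 3 since otherwise infeasible
      have ha3 : 3 ≤ a := by
        by_contra hcon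
        push_neg at hcon
        have : a = 2 := by omega
        subst this
        rw [Ssum_le_one (by omega)] at hf
        omega
      -- Mfun (a-1) (a+1+c) = (a-1) * Mfun (a-2) (c+2)
      have hrw : Mfun (a-1) (a + 1 + c) = (a-1) * Mfun (a-2) (c + 2) := by
        rw [Mfun_of_ge (by omega) (by omega)]
        congr 2
        omega
      have hfeas2 : c + 2 ≤ Ssum (a-2) := by
        have h1 : Ssum (a-1) = Ssum (a-2) + (a-1) := by
          have := Ssum_succ (m := a-2) (by omega)
          have h2 : a - 2 + 1 = a - 1 := by omega
          rwa [h2] at this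
        omega
      have hM : c + 2 ≤ Mfun (a-2) (c + 2) := Mfun_ge (a-2) (c+2) (by omega) hfeas2
      rw [hrw]
      have key : (a + c) * (2 * (a - 1)) ≤ a * ((a-1) * (c+2)) := by
        obtain ⟨b, rfl⟩ : ∃ b, a = b + 3 := ⟨a - 3, by omega⟩
        have h1 : b + 3 - 1 = b + 2 := by omega
        rw [h1]
        calc (b + 3 + c) * (2 * (b + 2)) = (2 * (b + 3 + c)) * (b + 2) := by ring
          _ ≤ ((b + 3) * (c + 2)) * (b + 2) := Nat.mul_le_mul_right _ (by nlinarith)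
          _ = (b + 3) * ((b + 2) * (c + 2)) := by ring
      calc (a + c) * (2 * (a - 1)) ≤ a * ((a-1) * (c+2)) := key
        _ ≤ a * ((a-1) * Mfun (a-2) (c+2)) := by
            exact Nat.mul_le_mul_left _ (Nat.mul_le_mul_left _ hM)
    · -- y ≥ a + 2
      have ha3 : 3 ≤ a := by
        by_contra hcon
        push_neg at hcon
        have : a = 2 := by omega
        subst this
        rw [Ssum_le_one (by omega)] at hf
        omega
      rw [Mfun_of_ge (by omega) (by omega)]
      have hrw : Mfun (a-1) (y + c) = (a-1) * Mfun (a-2) ((y - a) + (c + 1)) := by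
        rw [Mfun_of_ge (by omega) (by omega)]
        congr 2
        omega
      rw [hrw]
      have hfeas2 : (y - a) + (c + 1) ≤ Ssum (a-2) := by
        have h1 : Ssum (a-1) = Ssum (a-2) + (a-1) := by
          have := Ssum_succ (m := a-2) (by omega)
          have h2 : a - 2 + 1 = a - 1 := by omega
          rwa [h2] at this
        omega
      have hIH := IH (a-1) (by omega) (c+1) (y-a) (by omega) (by omega)
        (Or.inr (by omega)) (by
          have h2 : a - 1 - 1 = a - 2 := by omega
          rw [h2]; exact hfeas2)
      -- hIH : (a-1 + (c+1)) * Mfun (a-1) (y-a) ≤ (a-1) * Mfun (a-1-1) (y-a + (c+1))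
      have h2 : a - 1 - 1 = a - 2 := by omega
      rw [h2] at hIH
      have h3 : a - 1 + (c + 1) = a + c := by omega
      rw [h3] at hIH
      -- goal : (a+c) * (a * Mfun (a-1) (y-a)) ≤ a * ((a-1) * Mfun (a-2) (y-a+(c+1)))
      calc (a + c) * (a * Mfun (a-1) (y - a))
          = a * ((a + c) * Mfun (a-1) (y - a)) := by ring
        _ ≤ a * ((a-1) * Mfun (a-2) (y - a + (c+1))) := Nat.mul_le_mul_left _ hIH

/-- Feasibility-limited antitonicity of `Mfun` in the cap. -/
lemma key2 {m s : ℕ} (hf : s ≤ Ssum m) :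
    Mfun (m+1) s ≤ Mfun m s := by
  rcases Nat.lt_or_ge s 2 with h2 | h2
  · interval_cases s
    · rw [Mfun_zero, Mfun_zero]
    · rw [Mfun_one, Mfun_one]
  rcases le_or_gt s m with h | h
  · rw [Mfun_of_le h2 h, Mfun_of_le h2 (by omega)]
  rcases eq_or_lt_of_le (Nat.succ_le_of_lt h) with h' | h'
  · -- s = m + 1
    have hs' : s = m + 1 := by omega
    subst hs'
    have hm3 : 3 ≤ m := by
      by_contra hcon
      push_neg at hcon
      interval_cases m <;> simp_all [Ssum_le_one, Ssum_two]
    rw [Mfun_of_le h2 (by omega), Mfun_succ (by omega)]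
    omega
  rcases eq_or_lt_of_le (Nat.succ_le_of_lt h') with h'' | h''
  · -- s = m + 2
    have hs' : s = m + 2 := by omega
    subst hs'
    have hm3 : 3 ≤ m := by
      by_contra hcon
      push_neg at hcon
      interval_cases m <;> simp_all [Ssum_le_one, Ssum_two]
    have e1 : Mfun (m+1) (m+2) = 2 * m := by
      have := Mfun_succ (m := m+1) (by omega)
      simpa using this
    have e2 : Mfun m (m+2) = m * Mfun (m-1) 2 := by
      have := Mfun_of_ge (m := m) (s := m+2) (by omega) (by omega)
      simpa using this
    rw [e1, e2, Mfun_of_le (le_refl 2) (by omega)]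
    omega
  · -- s ≥ m + 3
    have hm2 : 2 ≤ m := by
      by_contra hcon
      push_neg at hcon
      interval_cases m <;> simp_all [Ssum_le_one, Ssum_two] <;> omega
    have e1 : Mfun (m+1) s = (m+1) * Mfun m (s - (m+1)) := by
      have := Mfun_of_ge (m := m+1) (s := s) (by omega) (by omega)
      simpa using this
    have e2 : Mfun m s = m * Mfun (m-1) (s - m) := Mfun_of_ge (by omega) (by omega)
    rw [e1, e2]
    have hfeas : (s - (m+1)) + 1 ≤ Ssum (m-1) := by
      have h1 : Ssum m = Ssum (m-1) + m := by
        have := Ssum_succ (m := m-1) (by omega)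
        have hh : m - 1 + 1 = m := by omega
        rwa [hh] at this
      omega
    have hp := prop' m 1 (s - (m+1)) hm2 (le_refl 1) (Or.inr (by omega)) hfeas
    have h4 : s - (m+1) + 1 = s - m := by omega
    rw [h4] at hp
    exact hp

/-- Main lower bound claim. -/
lemma claim (n : ℕ) : ∀ W : Finset ℕ, (∀ w ∈ W, 2 ≤ w ∧ w ≤ n) →
    ∀ s, s ≤ ∑ w ∈ W, w → Mfun n s ≤ ∏ w ∈ W, w := by
  induction n using Nat.strong_induction_on with
  | _ n IH =>
    intro W hW s hs
    have hW2 : ∀ w ∈ W, 2 ≤ w := fun w hw => (hW w hw).1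
    rcases Nat.lt_or_ge s 2 with h2 | h2
    · interval_cases s
      · rw [Mfun_zero]; exact prod_pos_aux W hW2
      · rw [Mfun_one]
        apply two_le_prod_aux W hW2
        rcases W.eq_empty_or_nonempty with rfl | h
        · simp at hs
        · exact h
    have hsum : s ≤ ∏ w ∈ W, w := le_trans hs (prod_ge_sum W hW2)
    rcases le_or_gt s n with h | h
    · rw [Mfun_of_le h2 h]; exact hsum
    have hn2 : 2 ≤ n := by
      by_contra hcon
      push_neg at hcon
      have he : W = ∅ := by
        rw [Finset.eq_empty_iff_forall_notMem]
        intro w hw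
        have := hW w hw
        omega
      subst he
      simp at hs
      omega
    rcases eq_or_lt_of_le (Nat.succ_le_of_lt h) with h' | h'
    · -- s = n + 1
      have hs' : s = n + 1 := by omega
      subst hs'
      rw [Mfun_succ (by omega)]
      have hne : W.Nonempty := by
        rcases W.eq_empty_or_nonempty with rfl | hne
        · simp at hs
        · exact hne
      obtain ⟨w, hwmem⟩ := hne
      have hw2 : 2 ≤ w := (hW w hwmem).1
      have hwn : w ≤ n := (hW w hwmem).2
      have hprod : (∏ x ∈ W.erase w, x) * w = ∏ x ∈ W, x :=
        Finset.prod_erase_mul W (fun x => x) hwmem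
      have hsum' : (∑ x ∈ W.erase w, x) + w = ∑ x ∈ W, x :=
        Finset.sum_erase_add W (fun x => x) hwmem
      have hW'ne : (W.erase w).Nonempty := by
        rcases (W.erase w).eq_empty_or_nonempty with he | hne'
        · exfalso
          rw [he] at hsum'
          simp at hsum'
          omega
        · exact hne'
      have hW'2 : 2 ≤ ∏ x ∈ W.erase w, x :=
        two_le_prod_aux _ (fun x hx => hW2 x (Finset.mem_erase.mp hx).2) hW'ne
      rcases le_or_gt (n-1) w with hbig | hsmall
      · calc 2 * (n - 1) ≤ 2 * w := by omega
          _ ≤ (∏ x ∈ W.erase w, x) * w := Nat.mul_le_mul_right _ hW'2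
          _ = ∏ x ∈ W, x := hprod
      · have hsumW' : n + 1 - w ≤ ∑ x ∈ W.erase w, x := by omega
        have hprodW' : n + 1 - w ≤ ∏ x ∈ W.erase w, x :=
          le_trans hsumW' (prod_ge_sum _ (fun x hx => hW2 x (Finset.mem_erase.mp hx).2))
        have hquad : 2 * (n - 1) ≤ (n + 1 - w) * w := by
          obtain ⟨w', rfl⟩ : ∃ w', w = w' + 2 := ⟨w - 2, by omega⟩
          obtain ⟨u, hu⟩ : ∃ u, n + 1 - (w' + 2) = u + 3 := ⟨n - w' - 4, by omega⟩
          rw [hu]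
          have hn1 : n - 1 = w' + u + 3 := by omega
          rw [hn1]
          nlinarith
        calc 2 * (n - 1) ≤ (n + 1 - w) * w := hquad
          _ ≤ (∏ x ∈ W.erase w, x) * w := Nat.mul_le_mul_right _ hprodW'
          _ = ∏ x ∈ W, x := hprod
    · -- s ≥ n + 2
      rw [Mfun_of_ge (by omega) (by omega)]
      by_cases hmem : n ∈ W
      · have hprod : (∏ x ∈ W.erase n, x) * n = ∏ x ∈ W, x :=
          Finset.prod_erase_mul W (fun x => x) hmem
        have hsum' : (∑ x ∈ W.erase n, x) + n = ∑ x ∈ W, x :=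
          Finset.sum_erase_add W (fun x => x) hmem
        have hIH := IH (n-1) (by omega) (W.erase n) (fun x hx => by
          have h1 := hW x (Finset.mem_erase.mp hx).2
          have h2 := (Finset.mem_erase.mp hx).1
          omega) (s - n) (by omega)
        calc n * Mfun (n-1) (s-n) ≤ n * ∏ x ∈ W.erase n, x := Nat.mul_le_mul_left _ hIH
          _ = (∏ x ∈ W.erase n, x) * n := by ring
          _ = ∏ x ∈ W, x := hprod
      · have hWsub : ∀ w ∈ W, 2 ≤ w ∧ w ≤ n - 1 := fun x hx => by
          have h1 := hW x hx
          have : x ≠ n := fun hxe => hmem (hxe ▸ hx)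
          omega
        have hIH := IH (n-1) (by omega) W hWsub s hs
        have hfeas : s ≤ Ssum (n-1) := by
          have hsub : W ⊆ Finset.Icc 2 (n-1) := fun x hx => by
            have := hWsub x hx
            simp only [Finset.mem_Icc]
            omega
          have hle : (∑ w ∈ W, w) ≤ Ssum (n-1) :=
            Finset.sum_le_sum_of_subset hsub
          omega
        have hkey : Mfun n s ≤ Mfun (n-1) s := by
          obtain ⟨m, rfl⟩ : ∃ m, n = m + 1 := ⟨n - 1, by omega⟩
          simpa using key2 (by simpa using hfeas)
        rw [Mfun_of_ge (by omega) (by omega)] at hkey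
        exact le_trans hkey hIH

/-- `Mfun` is exact on block sums. -/
lemma block_eval : ∀ t n : ℕ, 1 ≤ t → t + 2 ≤ n →
    Mfun n (∑ j ∈ Finset.range t, (n - j)) = ∏ j ∈ Finset.range t, (n - j) := by
  intro t
  induction t with
  | zero => omega
  | succ t ih =>
    intro n ht hn
    rcases Nat.eq_zero_or_pos t with rfl | ht1
    · simp only [zero_add, Finset.sum_range_one, Finset.prod_range_one, Nat.sub_zero]
      exact Mfun_of_le (by omega) (le_refl n)
    · have hsum : (∑ j ∈ Finset.range (t+1), (n - j))
          = (∑ j ∈ Finset.range t, (n - 1 - j)) + n := by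
        rw [Finset.sum_range_succ' (fun j => n - j) t]
        congr 1
        apply Finset.sum_congr rfl
        intro j _
        omega
      have hprod : (∏ j ∈ Finset.range (t+1), (n - j))
          = (∏ j ∈ Finset.range t, (n - 1 - j)) * n := by
        rw [Finset.prod_range_succ' (fun j => n - j) t]
        congr 1
        apply Finset.prod_congr rfl
        intro j _
        omega
      have hbig : n + 2 ≤ (∑ j ∈ Finset.range (t+1), (n - j)) := by
        rw [hsum]
        have : n - 1 - 0 ≤ ∑ j ∈ Finset.range t, (n - 1 - j) :=
          Finset.single_le_sum (f := fun j => n - 1 - j)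
            (fun i _ => Nat.zero_le _) (Finset.mem_range.mpr (by omega))
        omega
      rw [Mfun_of_ge (by omega) hbig, hsum, hprod]
      have harg : (∑ j ∈ Finset.range t, (n - 1 - j)) + n - n
          = ∑ j ∈ Finset.range t, (n - 1 - j) := by omega
      rw [harg]
      have := ih (n-1) ht1 (by omega)
      rw [this]
      ring

lemma fact_eq (n : ℕ) : ∀ t, t ≤ n →
    Nat.factorial n = (∏ j ∈ Finset.range t, (n - j)) * Nat.factorial (n - t) := by
  intro t
  induction t with
  | zero => simp
  | succ t ih =>
    intro ht
    rw [Finset.prod_range_succ]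
    have h1 := ih (by omega)
    have h2 : Nat.factorial (n - t) = (n - t) * Nat.factorial (n - (t+1)) := by
      have h3 : n - t = (n - (t+1)) + 1 := by omega
      rw [h3, Nat.factorial_succ]
    rw [h1, h2]
    ring

lemma two_mul_block (n t : ℕ) (h : t ≤ n) :
    2 * (∑ j ∈ Finset.range t, (n - j)) + t * t = t * (2 * n + 1) := by
  rcases Nat.eq_zero_or_pos t with rfl | ht
  · simp
  have h1 : (∑ j ∈ Finset.range t, (n - j)) + (∑ j ∈ Finset.range t, j) = t * n := by
    rw [← Finset.sum_add_distrib]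
    have : ∀ j ∈ Finset.range t, (n - j) + j = n := by
      intro j hj
      have := Finset.mem_range.mp hj
      omega
    rw [Finset.sum_congr rfl this]
    simp [Finset.sum_const, mul_comm]
  have h2 : (∑ j ∈ Finset.range t, j) * 2 = t * (t - 1) := Finset.sum_range_id_mul_two t
  obtain ⟨t', rfl⟩ : ∃ t', t = t' + 1 := ⟨t - 1, by omega⟩
  simp only [Nat.add_sub_cancel] at h2
  nlinarith [h1, h2]

/-- Bridge: sums and products over `V : Finset (Fin n)` of `v.1+1` equal those over
the image value set. -/
lemma image_sum (n : ℕ) (V : Finset (Fin n)) :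
    ∑ u ∈ V.image (fun v : Fin n => v.1 + 1), u = ∑ v ∈ V, (v.1 + 1) :=
  Finset.sum_image (fun x _ y _ h => by
    have : x.1 = y.1 := by omega
    exact Fin.ext this)

lemma image_prod (n : ℕ) (V : Finset (Fin n)) :
    ∏ u ∈ V.image (fun v : Fin n => v.1 + 1), u = ∏ v ∈ V, (v.1 + 1) :=
  Finset.prod_image (fun x _ y _ h => by
    have : x.1 = y.1 := by omega
    exact Fin.ext this)

/-- Build a `Finset (Fin n)` from a value set `U ⊆ [1,n]`. -/
lemma exists_V_of_U (n : ℕ) (U : Finset ℕ) (hU : ∀ u ∈ U, 1 ≤ u ∧ u ≤ n) :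
    ∃ V : Finset (Fin n), V.image (fun v : Fin n => v.1 + 1) = U := by
  classical
  refine ⟨Finset.univ.filter (fun v : Fin n => v.1 + 1 ∈ U), ?_⟩
  ext x
  simp only [Finset.mem_image, Finset.mem_filter, Finset.mem_univ, true_and]
  constructor
  · rintro ⟨v, hv, rfl⟩
    exact hv
  · intro hx
    have hx1 := hU x hx
    refine ⟨⟨x - 1, by omega⟩, ?_, ?_⟩
    · simpa using by
        have : x - 1 + 1 = x := by omega
        rw [this]; exact hx
    · have : x - 1 + 1 = x := by omega
      simpa using this

/-- Any admissible product is at least the block product. -/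
lemma member_lower (n k t : ℕ) (ht2 : t + 2 ≤ n)
    (hk : (∑ j ∈ Finset.range t, (n - j)) + 1 ≤ k)
    (V : Finset (Fin n)) (hV0 : ∃ v ∈ V, v.1 = 0)
    (hVsum : ∑ v ∈ V, (v.1 + 1) = k) :
    (∏ j ∈ Finset.range t, (n - j)) ≤ ∏ v ∈ V, (v.1 + 1) := by
  classical
  rcases Nat.eq_zero_or_pos t with rfl | ht
  · simp only [Finset.range_zero, Finset.prod_empty]
    exact Finset.one_le_prod' (fun v _ => by omega)
  set U := V.image (fun v : Fin n => v.1 + 1) with hU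
  have hUsum : ∑ u ∈ U, u = k := by rw [hU, image_sum n V, hVsum]
  have hUprod : ∏ u ∈ U, u = ∏ v ∈ V, (v.1 + 1) := image_prod n V
  have h1U : 1 ∈ U := by
    obtain ⟨v, hv, hv0⟩ := hV0
    rw [hU]
    apply Finset.mem_image.mpr
    exact ⟨v, hv, by omega⟩
  have hUbd : ∀ u ∈ U, 1 ≤ u ∧ u ≤ n := by
    intro u hu
    obtain ⟨v, _, rfl⟩ := Finset.mem_image.mp hu
    have := v.2
    omega
  have hWsum : (∑ x ∈ U.erase 1, x) + 1 = k := by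
    have h := Finset.sum_erase_add U (fun x => x) h1U
    omega
  have hWbd : ∀ w ∈ U.erase 1, 2 ≤ w ∧ w ≤ n := by
    intro w hw
    have h1 := Finset.mem_erase.mp hw
    have h2 := hUbd w h1.2
    omega
  have hclaim := claim n (U.erase 1) hWbd (∑ j ∈ Finset.range t, (n - j)) (by omega)
  rw [block_eval t n ht (by omega)] at hclaim
  have hWprod : (∏ x ∈ U.erase 1, x) * 1 = ∏ u ∈ U, u := by
    have h := Finset.prod_erase_mul U (fun x => x) h1U
    simpa using h
  omega

/-- Realize a value set `U ∋ 1` inside `[1,n]` as a position set. -/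
lemma mem_of_U (n k : ℕ) (U : Finset ℕ) (hU : ∀ u ∈ U, 1 ≤ u ∧ u ≤ n) (h1 : 1 ∈ U)
    (hsum : ∑ u ∈ U, u = k) :
    ∃ V : Finset (Fin n), (∃ v ∈ V, v.1 = 0) ∧ (∑ v ∈ V, (v.1 + 1) = k) ∧
      (∏ v ∈ V, (v.1 + 1) = ∏ u ∈ U, u) := by
  obtain ⟨V, hVU⟩ := exists_V_of_U n U hU
  refine ⟨V, ?_, ?_, ?_⟩
  · have : (1 : ℕ) ∈ V.image (fun v : Fin n => v.1 + 1) := hVU ▸ h1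
    obtain ⟨v, hv, hv1⟩ := Finset.mem_image.mp this
    exact ⟨v, hv, by omega⟩
  · rw [← image_sum n V, hVU, hsum]
  · rw [← image_prod n V, hVU]

lemma witness_upper (n i₀ k : ℕ) (hn : i₀ + 3 ≤ n) (hk1 : n + 1 ≤ k)
    (hS2 : (∑ j ∈ Finset.range (i₀+1), (n - j)) ≤ k - 1)
    (hS' : k - 1 < (∑ j ∈ Finset.range (i₀+1), (n - j)) + (n - (i₀+1)))
    (h4 : k - 1 = (∑ j ∈ Finset.range (i₀+1), (n - j)) + 1 → i₀ + 4 ≤ n) :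
    ∃ V : Finset (Fin n), (∃ v ∈ V, v.1 = 0) ∧ (∑ v ∈ V, (v.1 + 1) = k) ∧
      (∏ v ∈ V, (v.1 + 1)) ≤ n * ∏ j ∈ Finset.range (i₀+1), (n - j) := by
  classical
  set St := ∑ j ∈ Finset.range (i₀+1), (n - j) with hSt
  set Pt := ∏ j ∈ Finset.range (i₀+1), (n - j) with hPt
  set B : Finset ℕ := (Finset.range (i₀+1)).image (fun j => n - j) with hB
  have hBinj : ∀ x ∈ Finset.range (i₀+1), ∀ y ∈ Finset.range (i₀+1),
      n - x = n - y → x = y := by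
    intro x hx y hy hxy
    have hx' := Finset.mem_range.mp hx
    have hy' := Finset.mem_range.mp hy
    omega
  have hBsum : ∑ u ∈ B, u = St := Finset.sum_image hBinj
  have hBprod : ∏ u ∈ B, u = Pt := Finset.prod_image hBinj
  have hBmem : ∀ u ∈ B, n - i₀ ≤ u ∧ u ≤ n := by
    intro u hu
    obtain ⟨j, hj, rfl⟩ := Finset.mem_image.mp hu
    have := Finset.mem_range.mp hj
    omega
  have hPpos : 1 ≤ Pt := by
    rw [hPt]
    exact Finset.one_le_prod' (fun j hj => by
      have := Finset.mem_range.mp hj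
      omega)
  set d := k - 1 - St with hd
  have hdlt : d < n - (i₀+1) := by omega
  have hkd : k = St + d + 1 := by omega
  rcases Nat.lt_or_ge d 2 with hd2 | hd2
  · rcases Nat.eq_zero_or_pos d with hd0 | hd1
    · -- d = 0 : U = insert 1 B
      have h1B : 1 ∉ B := fun h => by have := hBmem 1 h; omega
      obtain ⟨V, hV0, hVsum, hVprod⟩ := mem_of_U n k (insert 1 B)
        (by
          intro u hu
          rcases Finset.mem_insert.mp hu with rfl | hu'
          · omega
          · have := hBmem u hu'; omega)
        (Finset.mem_insert_self 1 B)
        (by rw [Finset.sum_insert h1B, hBsum]; omega)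
      refine ⟨V, hV0, hVsum, ?_⟩
      rw [hVprod, Finset.prod_insert h1B, hBprod]
      calc 1 * Pt = Pt := one_mul Pt
        _ ≤ n * Pt := Nat.le_mul_of_pos_left Pt (by omega)
    · -- d = 1 : U = insert 1 (insert 2 (insert (n-i₀-1) B'))
      have hd1' : d = 1 := by omega
      have hn4 : i₀ + 4 ≤ n := h4 (by omega)
      set B' : Finset ℕ := (Finset.range i₀).image (fun j => n - j) with hB'
      have hB'inj : ∀ x ∈ Finset.range i₀, ∀ y ∈ Finset.range i₀,
          n - x = n - y → x = y := by
        intro x hx y hy hxy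
        have hx' := Finset.mem_range.mp hx
        have hy' := Finset.mem_range.mp hy
        omega
      have hB'sum : ∑ u ∈ B', u = ∑ j ∈ Finset.range i₀, (n - j) :=
        Finset.sum_image hB'inj
      have hB'prod : ∏ u ∈ B', u = ∏ j ∈ Finset.range i₀, (n - j) :=
        Finset.prod_image hB'inj
      have hB'mem : ∀ u ∈ B', n - i₀ + 1 ≤ u ∧ u ≤ n := by
        intro u hu
        obtain ⟨j, hj, rfl⟩ := Finset.mem_image.mp hu
        have := Finset.mem_range.mp hj
        omega
      have hsplit_sum : St = (∑ j ∈ Finset.range i₀, (n - j)) + (n - i₀) := by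
        rw [hSt, Finset.sum_range_succ]
      have hsplit_prod : Pt = (∏ j ∈ Finset.range i₀, (n - j)) * (n - i₀) := by
        rw [hPt, Finset.prod_range_succ]
      have hm1 : (n - i₀ - 1) ∉ B' := fun h => by have := hB'mem _ h; omega
      have hm2 : (2 : ℕ) ∉ insert (n - i₀ - 1) B' := fun h => by
        rcases Finset.mem_insert.mp h with h' | h'
        · omega
        · have := hB'mem _ h'; omega
      have hm3 : (1 : ℕ) ∉ insert 2 (insert (n - i₀ - 1) B') := fun h => by
        rcases Finset.mem_insert.mp h with h' | h'
        · omega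
        · rcases Finset.mem_insert.mp h' with h'' | h''
          · omega
          · have := hB'mem _ h''; omega
      obtain ⟨V, hV0, hVsum, hVprod⟩ := mem_of_U n k
        (insert 1 (insert 2 (insert (n - i₀ - 1) B')))
        (by
          intro u hu
          rcases Finset.mem_insert.mp hu with rfl | hu'
          · omega
          rcases Finset.mem_insert.mp hu' with rfl | hu''
          · omega
          rcases Finset.mem_insert.mp hu'' with rfl | hu'''
          · omega
          · have := hB'mem u hu'''; omega)
        (Finset.mem_insert_self _ _)
        (by
          rw [Finset.sum_insert hm3, Finset.sum_insert hm2, Finset.sum_insert hm1,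
            hB'sum]
          omega)
      refine ⟨V, hV0, hVsum, ?_⟩
      rw [hVprod, Finset.prod_insert hm3, Finset.prod_insert hm2,
        Finset.prod_insert hm1, hB'prod]
      rw [hsplit_prod]
      have hineq : 2 * (n - i₀ - 1) ≤ n * (n - i₀) := by
        have h5 : 2 ≤ n := by omega
        have h6 : n - i₀ - 1 ≤ n - i₀ := by omega
        exact Nat.mul_le_mul h5 h6
      calc 1 * (2 * ((n - i₀ - 1) * ∏ j ∈ Finset.range i₀, (n - j)))
          = (2 * (n - i₀ - 1)) * ∏ j ∈ Finset.range i₀, (n - j) := by ring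
        _ ≤ (n * (n - i₀)) * ∏ j ∈ Finset.range i₀, (n - j) :=
            Nat.mul_le_mul_right _ hineq
        _ = n * ((∏ j ∈ Finset.range i₀, (n - j)) * (n - i₀)) := by ring
  · -- d ≥ 2 : U = insert 1 (insert d B)
    have hmd : d ∉ B := fun h => by have := hBmem _ h; omega
    have hm1 : (1 : ℕ) ∉ insert d B := fun h => by
      rcases Finset.mem_insert.mp h with h' | h'
      · omega
      · have := hBmem _ h'; omega
    obtain ⟨V, hV0, hVsum, hVprod⟩ := mem_of_U n k (insert 1 (insert d B))
      (by
        intro u hu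
        rcases Finset.mem_insert.mp hu with rfl | hu'
        · omega
        rcases Finset.mem_insert.mp hu' with rfl | hu''
        · omega
        · have := hBmem u hu''; omega)
      (Finset.mem_insert_self _ _)
      (by rw [Finset.sum_insert hm1, Finset.sum_insert hmd, hBsum]; omega)
    refine ⟨V, hV0, hVsum, ?_⟩
    rw [hVprod, Finset.prod_insert hm1, Finset.prod_insert hmd, hBprod]
    calc 1 * (d * Pt) = d * Pt := one_mul _
      _ ≤ n * Pt := Nat.mul_le_mul_right _ (by omega)


/-- For `n+1 ≤ k < n(n-1)/2`, with `i₀` the greatest integer such that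
`k - 1 ≥ n + (n-1) + ⋯ + (n-i₀)`: `n!/(n-i₀-1)! ≤ m(n,k) ≤ eⁿ·n!/(n-i₀-1)!`. -/
theorem mProd_bounds (n k : ℕ) (hk1 : n + 1 ≤ k) (hk2 : k < n * (n - 1) / 2)
    (i₀ : ℕ) (hi₀ : ∑ i ∈ Finset.range (i₀ + 1), (n - i) ≤ k - 1)
    (hi₀' : ¬ (∑ i ∈ Finset.range (i₀ + 2), (n - i) ≤ k - 1)) :
    (Nat.factorial n : ℝ) / Nat.factorial (n - i₀ - 1) ≤ (mProd n k : ℝ) ∧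
      (mProd n k : ℝ) ≤
        Real.exp n * Nat.factorial n / Nat.factorial (n - i₀ - 1) := by
  classical
  have h2k : 2 * k + 2 ≤ n * (n - 1) := by
    have h1 : k + 1 ≤ n * (n - 1) / 2 := hk2
    have h2 : (n * (n - 1) / 2) * 2 ≤ n * (n - 1) := Nat.div_mul_le_self _ 2
    omega
  have hn4 : 4 ≤ n := by
    by_contra hcon
    push_neg at hcon
    interval_cases n <;> omega
  have hS' : k - 1 < (∑ i ∈ Finset.range (i₀ + 1), (n - i)) + (n - (i₀ + 1)) := by
    push_neg at hi₀'
    have hsp := Finset.sum_range_succ (fun j => n - j) (i₀ + 1)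
    have e : i₀ + 1 + 1 = i₀ + 2 := by omega
    rw [e] at hsp
    omega
  have hmono : ∀ a b : ℕ, a ≤ b →
      (∑ j ∈ Finset.range a, (n - j)) ≤ ∑ j ∈ Finset.range b, (n - j) :=
    fun a b hab => Finset.sum_le_sum_of_subset (Finset.range_subset_range.mpr hab)
  have hk1' : k - 1 + 1 = k := by omega
  have hi3 : i₀ + 3 ≤ n := by
    by_contra hcon
    push_neg at hcon
    have hmono' := hmono (n - 1) (i₀ + 1) (by omega)
    have htb := two_mul_block n (n - 1) (by omega)
    obtain ⟨m, rfl⟩ : ∃ m, n = m + 4 := ⟨n - 4, by omega⟩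
    have e1 : m + 4 - 1 = m + 3 := by omega
    rw [e1] at htb hmono' h2k
    have hc1 : (∑ j ∈ Finset.range (m + 3), (m + 4 - j)) ≤ k - 1 :=
      le_trans hmono' hi₀
    nlinarith [hc1, htb, h2k, hk1']
  have h4 : k - 1 = (∑ i ∈ Finset.range (i₀ + 1), (n - i)) + 1 → i₀ + 4 ≤ n := by
    intro heq
    by_contra hcon
    push_neg at hcon
    have hn3 : n = i₀ + 3 := by omega
    have htb := two_mul_block n (i₀ + 1) (by omega)
    obtain ⟨m, rfl⟩ : ∃ m, n = m + 4 := ⟨n - 4, by omega⟩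
    have e1 : m + 4 - 1 = m + 3 := by omega
    rw [e1] at h2k
    have hio : i₀ = m + 1 := by omega
    subst hio
    nlinarith [htb, h2k, hk1', heq]
  have hlower : ∀ p ∈ {p : ℕ | ∃ V : Finset (Fin n), (∃ v ∈ V, v.1 = 0) ∧
      (∑ v ∈ V, (v.1 + 1) = k) ∧ p = ∏ v ∈ V, (v.1 + 1)},
      (∏ j ∈ Finset.range (i₀ + 1), (n - j)) ≤ p := by
    rintro p ⟨V, hV0, hVs, rfl⟩
    exact member_lower n k (i₀ + 1) (by omega) (by omega) V hV0 hVs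
  obtain ⟨V, hV0, hVs, hVle⟩ := witness_upper n i₀ k hi3 hk1 hi₀ hS' h4
  have hmem : (∏ v ∈ V, (v.1 + 1)) ∈ {p : ℕ | ∃ V : Finset (Fin n), (∃ v ∈ V, v.1 = 0) ∧
      (∑ v ∈ V, (v.1 + 1) = k) ∧ p = ∏ v ∈ V, (v.1 + 1)} := ⟨V, hV0, hVs, rfl⟩
  have hne : Set.Nonempty {p : ℕ | ∃ V : Finset (Fin n), (∃ v ∈ V, v.1 = 0) ∧
      (∑ v ∈ V, (v.1 + 1) = k) ∧ p = ∏ v ∈ V, (v.1 + 1)} := ⟨_, hmem⟩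
  have hlow : (∏ j ∈ Finset.range (i₀ + 1), (n - j)) ≤ mProd n k :=
    le_csInf hne hlower
  have hup : mProd n k ≤ n * ∏ j ∈ Finset.range (i₀ + 1), (n - j) :=
    le_trans (Nat.sInf_le hmem) hVle
  have hfact : Nat.factorial n =
      (∏ j ∈ Finset.range (i₀ + 1), (n - j)) * Nat.factorial (n - (i₀ + 1)) :=
    fact_eq n (i₀ + 1) (by omega)
  have hidx : n - i₀ - 1 = n - (i₀ + 1) := by omega
  rw [hidx]
  have hFpos : (0 : ℝ) < (Nat.factorial (n - (i₀ + 1)) : ℝ) := by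
    exact_mod_cast Nat.factorial_pos _
  have hcast : (Nat.factorial n : ℝ) =
      ((∏ j ∈ Finset.range (i₀ + 1), (n - j) : ℕ) : ℝ) *
        (Nat.factorial (n - (i₀ + 1)) : ℝ) := by
    exact_mod_cast congrArg (fun x : ℕ => (x : ℝ)) hfact
  constructor
  · rw [div_le_iff₀ hFpos, hcast]
    have h1 : ((∏ j ∈ Finset.range (i₀ + 1), (n - j) : ℕ) : ℝ) ≤ (mProd n k : ℝ) := by
      exact_mod_cast hlow
    exact mul_le_mul_of_nonneg_right h1 (le_of_lt hFpos)
  · have hrhs : Real.exp n * (Nat.factorial n : ℝ) / (Nat.factorial (n - (i₀ + 1)) : ℝ)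
        = Real.exp n * ((∏ j ∈ Finset.range (i₀ + 1), (n - j) : ℕ) : ℝ) := by
      rw [hcast]
      field_simp
    rw [hrhs]
    have hexp : (n : ℝ) ≤ Real.exp n := by
      have := Real.add_one_le_exp (n : ℝ)
      linarith
    calc (mProd n k : ℝ)
        ≤ (n : ℝ) * ((∏ j ∈ Finset.range (i₀ + 1), (n - j) : ℕ) : ℝ) := by
          exact_mod_cast hup
      _ ≤ Real.exp n * ((∏ j ∈ Finset.range (i₀ + 1), (n - j) : ℕ) : ℝ) :=
          mul_le_mul_of_nonneg_right hexp (by positivity)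
end
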